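/- arXiv:2111.03732 — 6 statements merged into one kernel-verified Lean document; each statement's English description precedes it below -/
import Mathlib

section
/- Let 0 ≤ α < n. For every f ∈ L¹_loc(ℝⁿ) and every x ∈ ℝⁿ, the pointwise estimate M_α f(x) ≤ (n/(n-α)) · sup_{t>0} t^{α/n} f*(t) holds. -/
open MeasureTheory ENNReal Set Metric

/-- Non-increasing rearrangement of an `ℝ≥0∞`-valued function on `ℝⁿ`:
`g*(t) = inf {l | volume {x | g x > l} ≤ t}`. -/
noncomputable def rearr (n : ℕ) (g : EuclideanSpace ℝ (Fin n) → ℝ≥0∞) (t : ℝ) : ℝ≥0∞ :=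
  sInf {l : ℝ≥0∞ | volume {x | l < g x} ≤ ENNReal.ofReal t}

/-- The fractional maximal operator
`M_α f (x) = sup_{r>0} |B(x,r)|^(α/n - 1) ∫_{B(x,r)} |f|`. -/
noncomputable def fracMax (n : ℕ) (α : ℝ) (f : EuclideanSpace ℝ (Fin n) → ℝ)
    (x : EuclideanSpace ℝ (Fin n)) : ℝ≥0∞ :=
  ⨆ r : {r : ℝ // 0 < r},
    volume (ball x r.1) ^ (α / n - 1 : ℝ) * ∫⁻ y in ball x r.1, ENNReal.ofReal |f y|

/-- `f**(t) = (1/t) ∫₀^t f*(s) ds` for a real-valued `f` on `ℝⁿ`. -/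
noncomputable def dstar (n : ℕ) (f : EuclideanSpace ℝ (Fin n) → ℝ) (t : ℝ) : ℝ≥0∞ :=
  ENNReal.ofReal (1 / t) *
    ∫⁻ s in Set.Ioc (0 : ℝ) t, rearr n (fun y => ENNReal.ofReal |f y|) s

/-- Lorentz norm `‖g‖_{L_{p,q}} = (∫₀^∞ (t^{1/p} g*(t))^q dt/t)^{1/q}`, with the usual
supremum modification when `q = ∞`. -/
noncomputable def lorentzNorm (n : ℕ) (p : ℝ) (q : ℝ≥0∞)
    (g : EuclideanSpace ℝ (Fin n) → ℝ≥0∞) : ℝ≥0∞ :=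
  if q = ⊤ then
    ⨆ t : {t : ℝ // 0 < t}, ENNReal.ofReal (t.1 ^ (1 / p)) * rearr n g t.1
  else
    (∫⁻ t in Set.Ioi (0 : ℝ),
        (ENNReal.ofReal (t ^ (1 / p)) * rearr n g t) ^ q.toReal * ENNReal.ofReal (1 / t)) ^
      (1 / q.toReal)

/-- Lorentz–Morrey norm
`‖g‖_{𝓛_{p,q;λ}} = sup_{x, r>0} r^{-λ/p} ‖g χ_{B(x,r)}‖_{L_{p,q}}`. -/
noncomputable def lorentzMorrey (n : ℕ) (p : ℝ) (q : ℝ≥0∞) (lam : ℝ)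
    (g : EuclideanSpace ℝ (Fin n) → ℝ≥0∞) : ℝ≥0∞ :=
  ⨆ (x : EuclideanSpace ℝ (Fin n)) (r : {r : ℝ // 0 < r}),
    ENNReal.ofReal (r.1 ^ (-(lam / p))) * lorentzNorm n p q ((ball x r.1).indicator g)

/-!
With `S := sup_{t>0} t^{α/n} f*(t)` we have `f*(s) ≤ S s^{-α/n}`, and the Hardy–Littlewood
inequality `∫_B |f| ≤ ∫₀^{|B|} f*` gives `∫_B |f| ≤ S |B|^{1-α/n} · n/(n-α)`; multiplying by
`|B|^{α/n-1}` yields the claim. The Hardy–Littlewood step is the layer cake formula on both sides: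
`g* ≥ t` on `(0, |B ∩ {g > t}|)`, hence `|B ∩ {g > t}| ≤ |{s ∈ (0, |B|] : t ≤ h s}|` for every
majorant `h` of `g*`.
-/

lemma le_rearr_of_ofReal_lt {n : ℕ} {g : EuclideanSpace ℝ (Fin n) → ℝ≥0∞} {s : ℝ} {l : ℝ≥0∞}
    (h : ENNReal.ofReal s < volume {y | l < g y}) : l ≤ rearr n g s := by
  refine le_sInf fun l' hl' => ?_
  by_contra! hlt
  exact (measure_mono fun y hy => hlt.trans hy).trans hl' |>.not_gt h

lemma rearr_le_of_rpow_mul_rearr_le {n : ℕ} {g : EuclideanSpace ℝ (Fin n) → ℝ≥0∞}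
    {β s : ℝ} {S : ℝ≥0∞} (hs : 0 < s) (hS : S ≠ ∞)
    (h : ENNReal.ofReal (s ^ β) * rearr n g s ≤ S) :
    rearr n g s ≤ ENNReal.ofReal (S.toReal * s ^ (-β)) := by
  have hpos : ENNReal.ofReal (s ^ β) ≠ 0 := by simpa using Real.rpow_pos_of_pos hs β
  rw [mul_comm, ← ENNReal.le_div_iff_mul_le (Or.inl hpos) (Or.inl ofReal_ne_top)] at h
  rwa [ENNReal.ofReal_mul ENNReal.toReal_nonneg, ofReal_toReal hS, Real.rpow_neg hs.le,
    ENNReal.ofReal_inv_of_pos (Real.rpow_pos_of_pos hs β), ← div_eq_mul_inv]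

lemma setLIntegral_le_of_rearr_le {n : ℕ} {g : EuclideanSpace ℝ (Fin n) → ℝ}
    {B : Set (EuclideanSpace ℝ (Fin n))} (hB : volume B ≠ ∞) (hg0 : ∀ y, 0 ≤ g y)
    (hg : AEMeasurable g (volume.restrict B)) {h : ℝ → ℝ} (hh : Measurable h)
    (hh0 : ∀ s ∈ Ioc 0 (volume B).toReal, 0 ≤ h s)
    (hgh : ∀ s ∈ Ioc 0 (volume B).toReal,
      rearr n (fun y => ENNReal.ofReal (g y)) s ≤ ENNReal.ofReal (h s)) :
    ∫⁻ y in B, ENNReal.ofReal (g y) ≤ ∫⁻ s in Ioc 0 (volume B).toReal, ENNReal.ofReal (h s) := by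
  rw [lintegral_eq_lintegral_meas_lt _ (ae_of_all _ hg0) hg,
    lintegral_eq_lintegral_meas_le _ (ae_restrict_of_forall_mem measurableSet_Ioc hh0)
      hh.aemeasurable]
  refine setLIntegral_mono' measurableSet_Ioi fun t (ht : 0 < t) => ?_
  set c := volume.restrict B {y | t < g y}
  have hcB : c ≤ volume B :=
    (measure_mono (subset_univ _)).trans_eq (Measure.restrict_apply_univ B)
  have hc : c ≠ ∞ := ne_top_of_le_ne_top hB hcB
  have hsub : Ioo 0 c.toReal ⊆ {s | t ≤ h s} ∩ Ioc 0 (volume B).toReal := by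
    rintro s ⟨hs0, hsc⟩
    have hsB : s ∈ Ioc 0 (volume B).toReal := ⟨hs0, hsc.le.trans (toReal_mono hB hcB)⟩
    have hlevel : ENNReal.ofReal t ≤ rearr n (fun y => ENNReal.ofReal (g y)) s := by
      refine le_rearr_of_ofReal_lt ((ofReal_lt_iff_lt_toReal hs0.le hc).2 hsc |>.trans_le ?_)
      refine (Measure.restrict_apply_le _ _).trans_eq (congrArg volume ?_)
      ext y
      exact (ENNReal.ofReal_lt_ofReal_iff_of_nonneg ht.le).symm
    exact ⟨(ENNReal.ofReal_le_ofReal_iff (hh0 s hsB)).1 (hlevel.trans (hgh s hsB)), hsB⟩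
  calc c = volume (Ioo 0 c.toReal) := by simp [ofReal_toReal hc]
    _ ≤ _ := (measure_mono hsub).trans (Measure.le_restrict_apply _ _)

lemma lintegral_Ioc_const_mul_rpow {c r a : ℝ} (hc : 0 ≤ c) (hr : -1 < r) (ha : 0 ≤ a) :
    ∫⁻ s in Ioc 0 a, ENNReal.ofReal (c * s ^ r) = ENNReal.ofReal (c * (a ^ (r + 1) / (r + 1))) := by
  have hint : IntegrableOn (fun s : ℝ => c * s ^ r) (Ioc 0 a) :=
    (intervalIntegrable_iff_integrableOn_Ioc_of_le ha).1
      ((intervalIntegral.intervalIntegrable_rpow' hr).const_mul c)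
  have hnonneg : 0 ≤ᵐ[volume.restrict (Ioc 0 a)] fun s : ℝ => c * s ^ r :=
    ae_restrict_of_forall_mem measurableSet_Ioc fun s hs =>
      mul_nonneg hc (Real.rpow_nonneg hs.1.le r)
  rw [← ofReal_integral_eq_lintegral_ofReal hint hnonneg,
    ← intervalIntegral.integral_of_le ha, intervalIntegral.integral_const_mul,
    integral_rpow (Or.inl hr), Real.zero_rpow (by linarith), sub_zero]

/-- for `0 ≤ α < n`, every `f ∈ L¹_loc(ℝⁿ)` and every `x`,
`M_α f (x) ≤ (n/(n-α)) · sup_{t>0} t^{α/n} f*(t)`. -/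
theorem stmt_1 (n : ℕ) (α : ℝ) (hα0 : 0 ≤ α) (hαn : α < n)
    (f : EuclideanSpace ℝ (Fin n) → ℝ) (hf : LocallyIntegrable f volume)
    (x : EuclideanSpace ℝ (Fin n)) :
    fracMax n α f x ≤
      ENNReal.ofReal ((n : ℝ) / (n - α)) *
        ⨆ t : {t : ℝ // 0 < t},
          ENNReal.ofReal (t.1 ^ (α / n)) * rearr n (fun y => ENNReal.ofReal |f y|) t.1 := by
  have hn : (0 : ℝ) < n := hα0.trans_lt hαn
  have hexp_gt : -1 < -(α / n) := by rw [neg_lt_neg_iff, div_lt_one hn]; exact hαn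
  set S := ⨆ t : {t : ℝ // 0 < t},
    ENNReal.ofReal (t.1 ^ (α / n)) * rearr n (fun y => ENNReal.ofReal |f y|) t.1
  rcases eq_or_ne S ∞ with hS | hS
  · rw [hS, mul_top (by simpa using div_pos hn (sub_pos.2 hαn))]
    exact le_top
  refine iSup_le fun ⟨r, hr⟩ => ?_
  set V := volume (ball x r)
  have hV : 0 < V.toReal := toReal_pos (measure_ball_pos volume x hr).ne' measure_ball_lt_top.ne
  have hmajor : ∫⁻ y in ball x r, ENNReal.ofReal |f y| ≤
      ENNReal.ofReal (S.toReal * (V.toReal ^ (-(α / n) + 1) / (-(α / n) + 1))) := by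
    rw [← lintegral_Ioc_const_mul_rpow toReal_nonneg hexp_gt hV.le]
    refine setLIntegral_le_of_rearr_le measure_ball_lt_top.ne (fun y => abs_nonneg (f y))
      hf.aestronglyMeasurable.norm.aemeasurable.restrict (by fun_prop)
      (fun s hs => mul_nonneg toReal_nonneg (Real.rpow_nonneg hs.1.le _))
      fun s hs => rearr_le_of_rpow_mul_rearr_le hs.1 hS (le_iSup_of_le ⟨s, hs.1⟩ le_rfl)
  calc V ^ (α / n - 1) * ∫⁻ y in ball x r, ENNReal.ofReal |f y|
      ≤ ENNReal.ofReal (V.toReal ^ (α / n - 1)) *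
          ENNReal.ofReal (S.toReal * (V.toReal ^ (-(α / n) + 1) / (-(α / n) + 1))) := by
        rw [← ENNReal.ofReal_rpow_of_pos hV, ofReal_toReal measure_ball_lt_top.ne]
        gcongr
    _ = ENNReal.ofReal ((n : ℝ) / (n - α)) * S := by
        have hpow : V.toReal ^ (α / n - 1) * V.toReal ^ (-(α / n) + 1) = 1 := by
          rw [← Real.rpow_add hV]; simp
        have hcancel : V.toReal ^ (α / n - 1) * (S.toReal * (V.toReal ^ (-(α / n) + 1) /
            (-(α / n) + 1))) = (n : ℝ) / (n - α) * S.toReal := by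
          rw [mul_left_comm, mul_div_assoc', hpow]
          field_simp
          ring
        rw [← ENNReal.ofReal_mul (by positivity), hcancel, ENNReal.ofReal_mul (by positivity),
          ofReal_toReal hS]
end

section
/- Let 0 ≤ α < n. There exists a positive constant C, depending only on α and n, such that for every f ∈ L¹_loc(ℝⁿ), sup_{t>0} (M_α f)*(t) ≤ C · sup_{t>0} t^{α/n} f*(t); that is, M_α maps the weak Lorentz space WL_{n/α}(ℝⁿ) boundedly into L^∞. -/
open MeasureTheory ENNReal Set Metric

/-!
Write `g = |f|` and `N = sup_{t>0} t^{α/n} g*(t)`, so that `g*(s) ≤ N s^{-α/n}`. For a ball `B`,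
comparing level sets of `g` on `B` with those of `g*` on `(0, |B|]` and applying the layer cake
formula on both sides gives `∫_B g ≤ ∫_0^{|B|} N s^{-α/n} ds = N |B|^{1-α/n} / (1 - α/n)`,
hence `M_α f ≤ n N / (n - α)` everywhere, and the same bound holds for `(M_α f)*`.
-/

variable {n : ℕ}

lemma rearr_le_of_forall_le {g : EuclideanSpace ℝ (Fin n) → ℝ≥0∞} {M : ℝ≥0∞}
    (h : ∀ x, g x ≤ M) (t : ℝ) : rearr n g t ≤ M := by
  refine sInf_le ?_
  have hempty : {x | M < g x} = ∅ := eq_empty_of_forall_notMem fun x hx => (h x).not_gt hx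
  simp [hempty]

lemma le_rearr_of_ofReal_lt_volume {g : EuclideanSpace ℝ (Fin n) → ℝ≥0∞} {t : ℝ} {c : ℝ≥0∞}
    (h : ENNReal.ofReal t < volume {x | c < g x}) : c ≤ rearr n g t :=
  le_sInf fun _ hl => not_lt.1 fun hlc =>
    (h.trans_le (measure_mono fun _ hx => hlc.trans hx)).not_ge hl

lemma rearr_le_ofReal_mul_rpow_neg {g : EuclideanSpace ℝ (Fin n) → ℝ≥0∞} {a s : ℝ} {N : ℝ≥0∞}
    (hN : N ≠ ⊤) (hs : 0 < s) (h : ENNReal.ofReal (s ^ a) * rearr n g s ≤ N) :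
    rearr n g s ≤ ENNReal.ofReal (N.toReal * s ^ (-a)) := by
  have hsa : 0 < s ^ a := Real.rpow_pos_of_pos hs a
  rw [mul_comm, ← ENNReal.le_div_iff_mul_le (Or.inl (by positivity)) (Or.inl ofReal_ne_top)] at h
  rwa [Real.rpow_neg hs.le, ENNReal.ofReal_mul toReal_nonneg, ofReal_toReal hN,
    ofReal_inv_of_pos hsa, ← div_eq_mul_inv]

lemma restrict_lt_abs_le_restrict_Ioc_le {f : EuclideanSpace ℝ (Fin n) → ℝ}
    {B : Set (EuclideanSpace ℝ (Fin n))} (hB : volume B ≠ ⊤) {φ : ℝ → ℝ}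
    (hφ : ∀ s, 0 < s → rearr n (fun y => ENNReal.ofReal |f y|) s ≤ ENNReal.ofReal (φ s))
    {t : ℝ} (ht : 0 < t) :
    volume.restrict B {y | t < |f y|} ≤
      volume.restrict (Ioc 0 (volume B).toReal) {s | t ≤ φ s} := by
  set m := volume.restrict B {y | t < |f y|}
  have hmB : m ≤ volume B := by
    simpa using measure_mono (μ := volume.restrict B) (subset_univ {y | t < |f y|})
  have hmtop : m ≠ ⊤ := ne_top_of_le_ne_top hB hmB
  have hm_level : m ≤ volume {y | ENNReal.ofReal t < ENNReal.ofReal |f y|} :=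
    (Measure.restrict_apply_le _ _).trans <| measure_mono fun y hy =>
      (ENNReal.ofReal_lt_ofReal_iff (ht.trans hy)).2 hy
  -- `(0, m)` lies in the right-hand level set: `s < m ≤ d_f(t)` forces `t ≤ f*(s) ≤ φ s`.
  calc m = volume (Ioo 0 m.toReal) := by rw [Real.volume_Ioo, sub_zero, ofReal_toReal hmtop]
    _ ≤ volume ({s | t ≤ φ s} ∩ Ioc 0 (volume B).toReal) := by
      refine measure_mono fun s ⟨hs0, hsm⟩ => ⟨?_, hs0, ?_⟩
      · have hlt : ENNReal.ofReal s < m := (ofReal_lt_iff_lt_toReal hs0.le hmtop).2 hsm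
        have := (le_rearr_of_ofReal_lt_volume (hlt.trans_le hm_level)).trans (hφ s hs0)
        exact (ENNReal.ofReal_le_ofReal_iff'.1 this).resolve_right ht.not_ge
      · exact hsm.le.trans (toReal_mono hB hmB)
    _ ≤ _ := Measure.le_restrict_apply _ _

lemma setLIntegral_abs_le_setLIntegral_Ioc {f : EuclideanSpace ℝ (Fin n) → ℝ}
    {B : Set (EuclideanSpace ℝ (Fin n))} (hf : AEMeasurable f (volume.restrict B))
    (hB : volume B ≠ ⊤) {φ : ℝ → ℝ} (hφm : Measurable φ)
    (hφ0 : ∀ s ∈ Ioc 0 (volume B).toReal, 0 ≤ φ s)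
    (hφ : ∀ s, 0 < s → rearr n (fun y => ENNReal.ofReal |f y|) s ≤ ENNReal.ofReal (φ s)) :
    ∫⁻ y in B, ENNReal.ofReal |f y| ≤ ∫⁻ s in Ioc 0 (volume B).toReal, ENNReal.ofReal (φ s) := by
  rw [lintegral_eq_lintegral_meas_lt _ (ae_of_all _ fun y => abs_nonneg (f y)) hf.abs,
    lintegral_eq_lintegral_meas_le _ (ae_restrict_of_forall_mem measurableSet_Ioc hφ0)
      hφm.aemeasurable]
  exact setLIntegral_mono' measurableSet_Ioi fun t ht =>
    restrict_lt_abs_le_restrict_Ioc_le hB hφ ht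

lemma setLIntegral_Ioc_mul_rpow_neg {a K V : ℝ} (ha : a < 1) (hK : 0 ≤ K) (hV : 0 ≤ V) :
    ∫⁻ s in Ioc 0 V, ENNReal.ofReal (K * s ^ (-a)) =
      ENNReal.ofReal (K * V ^ (1 - a) / (1 - a)) := by
  have hint : IntervalIntegrable (fun s : ℝ => K * s ^ (-a)) volume 0 V :=
    (intervalIntegral.intervalIntegrable_rpow' (by linarith)).const_mul K
  rw [← ofReal_integral_eq_lintegral_ofReal hint.1
    (ae_restrict_of_forall_mem measurableSet_Ioc fun s hs =>
      mul_nonneg hK (Real.rpow_nonneg hs.1.le _)),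
    ← intervalIntegral.integral_of_le hV, intervalIntegral.integral_const_mul,
    integral_rpow (Or.inl (by linarith)), neg_add_eq_sub,
    Real.zero_rpow (sub_ne_zero.2 ha.ne'), sub_zero, mul_div_assoc]

lemma fracMax_le_of_rpow_mul_rearr_le {α : ℝ} (hα0 : 0 ≤ α) (hαn : α < n)
    {f : EuclideanSpace ℝ (Fin n) → ℝ} (hf : AEMeasurable f) {N : ℝ≥0∞}
    (hN : ∀ t, 0 < t →
      ENNReal.ofReal (t ^ (α / n)) * rearr n (fun y => ENNReal.ofReal |f y|) t ≤ N)
    (x : EuclideanSpace ℝ (Fin n)) :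
    fracMax n α f x ≤ ENNReal.ofReal (n / (n - α)) * N := by
  have hn : (0 : ℝ) < n := hα0.trans_lt hαn
  have ha : α / n < 1 := (div_lt_one hn).2 hαn
  rcases eq_or_ne N ⊤ with rfl | hNtop
  · rw [mul_top (by simpa using div_pos hn (sub_pos.2 hαn))]
    exact le_top
  refine iSup_le fun r => ?_
  set V := volume (ball x r.1)
  have hV : 0 < V.toReal := toReal_pos (measure_ball_pos volume x r.2).ne' measure_ball_lt_top.ne
  have hint := (setLIntegral_abs_le_setLIntegral_Ioc hf.restrict measure_ball_lt_top.ne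
    (by fun_prop) (fun s hs => mul_nonneg toReal_nonneg (Real.rpow_nonneg hs.1.le _))
    fun s hs => rearr_le_ofReal_mul_rpow_neg hNtop hs (hN s hs)).trans_eq
    (setLIntegral_Ioc_mul_rpow_neg ha toReal_nonneg hV.le)
  calc V ^ (α / n - 1) * ∫⁻ y in ball x r.1, ENNReal.ofReal |f y|
      ≤ ENNReal.ofReal (V.toReal ^ (α / n - 1)) *
          ENNReal.ofReal (N.toReal * V.toReal ^ (1 - α / n) / (1 - α / n)) := by
        rw [← ofReal_rpow_of_pos hV, ofReal_toReal measure_ball_lt_top.ne]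
        gcongr
    _ = ENNReal.ofReal (V.toReal ^ (α / n - 1 + (1 - α / n)) * N.toReal / (1 - α / n)) := by
        rw [← ENNReal.ofReal_mul (Real.rpow_nonneg hV.le _), Real.rpow_add hV]
        ring_nf
    _ = ENNReal.ofReal (n / (n - α)) * N := by
        rw [show α / n - 1 + (1 - α / n) = 0 by ring, Real.rpow_zero, one_mul,
          show N.toReal / (1 - α / n) = n / (n - α) * N.toReal by field_simp,
          ENNReal.ofReal_mul (div_pos hn (sub_pos.2 hαn)).le, ofReal_toReal hNtop]

/-- for `0 ≤ α < n` there is `C > 0` (depending only on `α, n`) with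
`sup_{t>0} (M_α f)*(t) ≤ C · sup_{t>0} t^{α/n} f*(t)` for every `f ∈ L¹_loc(ℝⁿ)`. -/
theorem stmt_2 (n : ℕ) (α : ℝ) (hα0 : 0 ≤ α) (hαn : α < n) :
    ∃ C : ℝ, 0 < C ∧ ∀ f : EuclideanSpace ℝ (Fin n) → ℝ, LocallyIntegrable f volume →
      (⨆ t : {t : ℝ // 0 < t}, rearr n (fracMax n α f) t.1) ≤
        ENNReal.ofReal C *
          ⨆ t : {t : ℝ // 0 < t},
            ENNReal.ofReal (t.1 ^ (α / n)) * rearr n (fun y => ENNReal.ofReal |f y|) t.1 := by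
  refine ⟨n / (n - α), div_pos (hα0.trans_lt hαn) (sub_pos.2 hαn), fun f hf => ?_⟩
  refine iSup_le fun t => rearr_le_of_forall_le (fun x => ?_) t.1
  exact fracMax_le_of_rpow_mul_rearr_le hα0 hαn hf.aestronglyMeasurable.aemeasurable
    (fun s hs => le_iSup_of_le (⟨s, hs⟩ : {t : ℝ // 0 < t}) le_rfl) x
end

section
/- Let 0 ≤ α < n. There exists a positive constant C, depending only on n and α, such that for all f ∈ L¹_loc(ℝⁿ) and all t > 0, (M_α f)*(t) ≤ C · sup_{t < τ < ∞} τ^{α/n} f**(τ), where f**(τ) := (1/τ) ∫₀^τ f*(s) ds. -/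
/-! Fix `t > 0`, let `λ = f**(t)` and `S = sup_{τ > t} τ^{α/n} f**(τ)`. By the
Hardy–Littlewood inequality `∫_B |f| ≤ ∫₀^{|B|} f*`, balls of measure `> t` have fractional
averages at most `S`, so a ball witnessing `M_α f(x) > C S` has `|B| ≤ t`; since
`t^{α/n} λ ≤ 2 S` (take `τ = 2t`), on such a ball `∫_B |f| ≥ (1 + 4ⁿ) λ |B|`. Cutting `|f|` at
the level `f*(t) ≤ λ` leaves `∫_B (|f| - f*(t))₊ ≥ 4ⁿ λ |B|`, while `∫ (|f| - f*(t))₊ ≤ t λ`.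
The Vitali covering lemma turns this into `|{M_α f > C S}| ≤ t` for `C = 2 + 2·4ⁿ`. -/

open MeasureTheory ENNReal Set Metric

theorem volume_ofReal_lt_inter_Ioi (c : ℝ≥0∞) :
    volume ({s : ℝ | ENNReal.ofReal s < c} ∩ Ioi 0) = c := by
  rcases eq_or_ne c ⊤ with rfl | hc
  · simp
  have : {s : ℝ | ENNReal.ofReal s < c} ∩ Ioi 0 = Ioo 0 c.toReal := by
    ext s
    simp only [mem_inter_iff, mem_ofPred_eq, mem_Ioi, mem_Ioo]
    constructor
    · rintro ⟨hs, hs0⟩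
      exact ⟨hs0, (ENNReal.ofReal_lt_iff_lt_toReal hs0.le hc).1 hs⟩
    · rintro ⟨hs0, hs⟩
      exact ⟨(ENNReal.ofReal_lt_iff_lt_toReal hs0.le hc).2 hs, hs0⟩
  rw [this, Real.volume_Ioo, sub_zero, ofReal_toReal hc]

theorem lintegral_eq_lintegral_meas_ofReal_lt {α : Type*} [MeasurableSpace α] (μ : Measure α)
    [SFinite μ] {g : α → ℝ≥0∞} (hg : AEMeasurable g μ) :
    ∫⁻ x, g x ∂μ = ∫⁻ l in Ioi (0 : ℝ), μ {x | ENNReal.ofReal l < g x} := by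
  -- both sides are the `μ × volume` measure of the region below the graph of `g`
  set S : Set (α × ℝ) := {p | ENNReal.ofReal p.2 < hg.mk g p.1}
  have hS : MeasurableSet S :=
    measurableSet_lt (ENNReal.measurable_ofReal.comp measurable_snd)
      (hg.measurable_mk.comp measurable_fst)
  have hslice : ∀ l : ℝ, μ {x | ENNReal.ofReal l < g x} = μ ((fun x => (x, l)) ⁻¹' S) := by
    refine fun l => measure_congr (hg.ae_eq_mk.mono fun x hx => ?_)
    change (ENNReal.ofReal l < g x) = (ENNReal.ofReal l < hg.mk g x)
    rw [hx]
  calc ∫⁻ x, g x ∂μ = ∫⁻ x, hg.mk g x ∂μ := lintegral_congr_ae hg.ae_eq_mk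
    _ = (μ.prod (volume.restrict (Ioi 0))) S := by
      rw [Measure.prod_apply hS]
      refine lintegral_congr fun x => ?_
      rw [Measure.restrict_apply (hS.preimage measurable_prodMk_left)]
      exact (volume_ofReal_lt_inter_Ioi _).symm
    _ = _ := by
      rw [Measure.prod_apply_symm hS]
      exact lintegral_congr fun l => (hslice l).symm

theorem setLIntegral_le_setLIntegral_tsub_add {α : Type*} [MeasurableSpace α] {μ : Measure α}
    (g : α → ℝ≥0∞) (a : ℝ≥0∞) (W : Set α) :
    ∫⁻ x in W, g x ∂μ ≤ (∫⁻ x in W, (g x - a) ∂μ) + a * μ W :=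
  calc ∫⁻ x in W, g x ∂μ ≤ ∫⁻ x in W, (g x - a + a) ∂μ :=
        lintegral_mono fun _ => le_tsub_add
    _ = _ := by rw [lintegral_add_right _ measurable_const, setLIntegral_const]

section Rearrangement

variable {n : ℕ} (g : EuclideanSpace ℝ (Fin n) → ℝ≥0∞)

theorem rearr_antitone : Antitone (rearr n g) :=
  fun _ _ h => sInf_le_sInf fun _ hl => hl.trans (ENNReal.ofReal_le_ofReal h)

theorem ofReal_mul_rearr_le_lintegral_rearr (t : ℝ) :
    ENNReal.ofReal t * rearr n g t ≤ ∫⁻ s in Ioc 0 t, rearr n g s :=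
  calc ENNReal.ofReal t * rearr n g t = ∫⁻ _ in Ioc 0 t, rearr n g t := by
        rw [setLIntegral_const, Real.volume_Ioc, sub_zero, mul_comm]
    _ ≤ _ := setLIntegral_mono' measurableSet_Ioc fun _ hs => rearr_antitone g hs.2

variable {g}

theorem volume_lt_le_of_rearr_le {s : ℝ} {l : ℝ≥0∞} (h : rearr n g s ≤ l) :
    volume {x | l < g x} ≤ ENNReal.ofReal s := by
  rcases eq_or_ne l ⊤ with rfl | hl
  · simp
  obtain ⟨u, hu_anti, hlu, hu⟩ := exists_seq_strictAnti_tendsto' (lt_top_iff_ne_top.2 hl)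
  have hunion : {x | l < g x} = ⋃ k, {x | u k < g x} := by
    ext x
    simp only [mem_ofPred_eq, mem_iUnion]
    exact ⟨fun hx => (hu.eventually (gt_mem_nhds hx)).exists,
      fun ⟨k, hk⟩ => (hlu k).1.trans hk⟩
  have hmono : Monotone fun k => {x | u k < g x} :=
    fun i j hij x hx => (hu_anti.antitone hij).trans_lt hx
  rw [hunion, hmono.measure_iUnion]
  refine iSup_le fun k => ?_
  obtain ⟨b, hb, hbu⟩ := sInf_lt_iff.1 (h.trans_lt (hlu k).1)
  exact (measure_mono fun x hx => hbu.trans hx).trans hb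

theorem lintegral_min_volume_lt_le_lintegral_rearr (T : ℝ) :
    ∫⁻ l in Ioi 0, min (ENNReal.ofReal T) (volume {x | ENNReal.ofReal l < g x}) ≤
      ∫⁻ s in Ioc 0 T, rearr n g s := by
  rw [lintegral_eq_lintegral_meas_ofReal_lt _ (rearr_antitone g).measurable.aemeasurable]
  refine lintegral_mono fun l => ?_
  rw [Measure.restrict_apply' measurableSet_Ioc, ← volume_ofReal_lt_inter_Ioi (min _ _)]
  refine measure_mono fun s ⟨hs, hs0⟩ => ⟨?_, hs0, ?_⟩
  · exact lt_of_not_ge fun hle => (lt_min_iff.1 hs).2.not_ge (volume_lt_le_of_rearr_le hle)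
  · exact ((ENNReal.ofReal_lt_ofReal_iff'.1 (lt_min_iff.1 hs).1).1).le

theorem setLIntegral_le_lintegral_rearr (hg : AEMeasurable g volume)
    {W : Set (EuclideanSpace ℝ (Fin n))} {T : ℝ} (hW : volume W ≤ ENNReal.ofReal T) :
    ∫⁻ x in W, g x ≤ ∫⁻ s in Ioc 0 T, rearr n g s := by
  rw [lintegral_eq_lintegral_meas_ofReal_lt _ hg.restrict]
  refine (lintegral_mono fun l => le_min ?_ ?_).trans
    (lintegral_min_volume_lt_le_lintegral_rearr T)
  · exact (measure_mono (subset_univ _)).trans ((Measure.restrict_apply_univ W).trans_le hW)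
  · exact Measure.restrict_apply_le _ _

theorem lintegral_tsub_rearr_le (hg : AEMeasurable g volume) (t : ℝ) :
    ∫⁻ x, (g x - rearr n g t) ≤ ∫⁻ s in Ioc 0 t, rearr n g s := by
  rw [lintegral_eq_lintegral_meas_ofReal_lt _ (hg.sub_const _)]
  refine (lintegral_mono fun l => le_min ?_ ?_).trans
    (lintegral_min_volume_lt_le_lintegral_rearr t)
  · refine (measure_mono (ofPred_subset_ofPred.2 fun x hx => ?_)).trans
      (volume_lt_le_of_rearr_le (g := g) le_rfl)
    exact tsub_pos_iff_lt.1 (zero_le.trans_lt hx)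
  · exact measure_mono (ofPred_subset_ofPred.2 fun x hx => hx.trans_le tsub_le_self)

end Rearrangement

section Dstar

variable {n : ℕ} {f : EuclideanSpace ℝ (Fin n) → ℝ} {t : ℝ}

theorem ofReal_mul_dstar (ht : 0 < t) :
    ENNReal.ofReal t * dstar n f t =
      ∫⁻ s in Ioc 0 t, rearr n (fun y => ENNReal.ofReal |f y|) s := by
  rw [dstar, ← mul_assoc, ← ENNReal.ofReal_mul ht.le, mul_one_div_cancel ht.ne', ofReal_one,
    one_mul]

theorem rearr_le_dstar (ht : 0 < t) :
    rearr n (fun y => ENNReal.ofReal |f y|) t ≤ dstar n f t := by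
  rw [← ENNReal.mul_le_mul_iff_right (ofReal_pos.2 ht).ne' ofReal_ne_top, ofReal_mul_dstar ht]
  exact ofReal_mul_rearr_le_lintegral_rearr _ t

theorem lintegral_tsub_rearr_le_ofReal_mul_dstar (hf : AEMeasurable f volume) (ht : 0 < t) :
    ∫⁻ y, (ENNReal.ofReal |f y| - rearr n (fun y => ENNReal.ofReal |f y|) t) ≤
      ENNReal.ofReal t * dstar n f t := by
  rw [ofReal_mul_dstar ht]
  exact lintegral_tsub_rearr_le hf.abs.ennreal_ofReal t

end Dstar

noncomputable def supRpowDstar (n : ℕ) (α : ℝ) (f : EuclideanSpace ℝ (Fin n) → ℝ)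
    (t : ℝ) : ℝ≥0∞ :=
  ⨆ τ : {τ : ℝ // t < τ}, ENNReal.ofReal (τ.1 ^ (α / n)) * dstar n f τ.1

section SupRpowDstar

variable {n : ℕ} {α : ℝ} {f : EuclideanSpace ℝ (Fin n) → ℝ} {t : ℝ}

theorem le_supRpowDstar {τ : ℝ} (h : t < τ) :
    ENNReal.ofReal (τ ^ (α / n)) * dstar n f τ ≤ supRpowDstar n α f t :=
  le_iSup (fun τ : {τ : ℝ // t < τ} => ENNReal.ofReal (τ.1 ^ (α / n)) * dstar n f τ.1)
    ⟨τ, h⟩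

theorem rpow_mul_dstar_le_two_mul_supRpowDstar (hα : 0 ≤ α) (ht : 0 < t) :
    ENNReal.ofReal (t ^ (α / n)) * dstar n f t ≤ 2 * supRpowDstar n α f t := by
  have hinv : ENNReal.ofReal (1 / t) = 2 * ENNReal.ofReal (1 / (2 * t)) := by
    rw [← ofReal_ofNat 2, ← ENNReal.ofReal_mul zero_le_two]
    congr 1
    field_simp
  calc ENNReal.ofReal (t ^ (α / n)) * dstar n f t
      = 2 * (ENNReal.ofReal (t ^ (α / n)) * (ENNReal.ofReal (1 / (2 * t)) *
          ∫⁻ s in Ioc 0 t, rearr n (fun y => ENNReal.ofReal |f y|) s)) := by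
        rw [dstar, hinv]
        ring
    _ ≤ 2 * (ENNReal.ofReal ((2 * t) ^ (α / n)) * dstar n f (2 * t)) := by
        rw [dstar]
        gcongr <;> linarith
    _ ≤ 2 * supRpowDstar n α f t := by
        gcongr
        exact le_supRpowDstar (by linarith)

theorem rpow_sub_one_mul_setLIntegral_le_supRpowDstar (hf : AEMeasurable f volume)
    {W : Set (EuclideanSpace ℝ (Fin n))} (hW : ENNReal.ofReal t < volume W)
    (hW_top : volume W ≠ ⊤) :
    volume W ^ (α / n - 1 : ℝ) * ∫⁻ y in W, ENNReal.ofReal |f y| ≤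
      supRpowDstar n α f t := by
  set τ := (volume W).toReal
  have hWτ : volume W = ENNReal.ofReal τ := (ofReal_toReal hW_top).symm
  obtain ⟨htτ, hτ⟩ := ENNReal.ofReal_lt_ofReal_iff'.1 (hWτ ▸ hW)
  calc volume W ^ (α / n - 1 : ℝ) * ∫⁻ y in W, ENNReal.ofReal |f y|
      ≤ ENNReal.ofReal τ ^ (α / n - 1 : ℝ) *
          ∫⁻ s in Ioc 0 τ, rearr n (fun y => ENNReal.ofReal |f y|) s := by
        rw [hWτ]
        gcongr
        exact setLIntegral_le_lintegral_rearr hf.abs.ennreal_ofReal hWτ.le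
    _ = ENNReal.ofReal (τ ^ (α / n)) * dstar n f τ := by
        rw [dstar, ← mul_assoc, ofReal_rpow_of_pos hτ, ← ENNReal.ofReal_mul (by positivity),
          Real.rpow_sub_one hτ.ne', div_eq_mul_one_div]
    _ ≤ supRpowDstar n α f t := le_supRpowDstar htτ

end SupRpowDstar

theorem ENNReal.mul_le_of_rpow_mul_le_rpow_sub_one_mul {v T K I : ℝ≥0∞} {β : ℝ}
    (hβ : 0 ≤ β) (hv0 : v ≠ 0) (hv_top : v ≠ ⊤) (hvT : v ≤ T)
    (h : T ^ β * K ≤ v ^ (β - 1) * I) :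
    K * v ≤ I :=
  calc K * v = K * v ^ β * v ^ (1 - β) := by
        rw [mul_assoc, ← ENNReal.rpow_add _ _ hv0 hv_top, add_sub_cancel, ENNReal.rpow_one]
    _ ≤ T ^ β * K * v ^ (1 - β) := by
        rw [mul_comm K]
        gcongr
    _ ≤ v ^ (β - 1) * I * v ^ (1 - β) := by gcongr
    _ = I := by
        rw [mul_right_comm, ← ENNReal.rpow_add _ _ hv0 hv_top, sub_add_sub_cancel, sub_self,
          ENNReal.rpow_zero, one_mul]

section Covering

open Module

variable {X : Type*} [NormedAddCommGroup X] [NormedSpace ℝ X] [FiniteDimensional ℝ X]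
  [MeasurableSpace X] [BorelSpace X] [Nontrivial X] (μ : Measure X) [μ.IsAddHaarMeasure]

theorem exists_radius_le_of_measure_ball_le {M : ℝ≥0∞} (hM : M ≠ ⊤) :
    ∃ R, ∀ (x : X) (r : ℝ), μ (ball x r) ≤ M → r ≤ R := by
  refine ⟨max 1 (M / μ (ball 0 1)).toReal, fun x r hr => ?_⟩
  rcases le_or_gt r 1 with hr1 | hr1
  · exact le_max_of_le_left hr1
  refine le_max_of_le_right ((le_self_pow₀ hr1.le (finrank_pos (R := ℝ) (M := X)).ne').trans ?_)
  rw [Measure.addHaar_ball_of_pos μ x (zero_lt_one.trans hr1)] at hr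
  refine (ENNReal.ofReal_le_iff_le_toReal (ENNReal.div_ne_top hM ?_)).1 ?_
  · exact (measure_ball_pos μ 0 zero_lt_one).ne'
  · exact (ENNReal.le_div_iff_mul_le (Or.inl (measure_ball_pos μ 0 zero_lt_one).ne')
      (Or.inl measure_ball_lt_top.ne)).2 hr

theorem mul_measure_le_of_forall_mul_measure_ball_le {E : Set X} {ρ : X → ℝ} {R : ℝ}
    (hρ0 : ∀ x ∈ E, 0 < ρ x) (hρR : ∀ x ∈ E, ρ x ≤ R) {c : ℝ≥0∞} {h : X → ℝ≥0∞}
    (hball : ∀ x ∈ E, c * μ (ball x (ρ x)) ≤ ∫⁻ y in ball x (ρ x), h y ∂μ) :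
    c * μ E ≤ 4 ^ finrank ℝ X * ∫⁻ y, h y ∂μ := by
  obtain ⟨u, huE, hdisj, hcover⟩ :=
    Vitali.exists_disjoint_subfamily_covering_enlargement_closedBall E id ρ R hρR 4 (by norm_num)
  have hdisj' : u.PairwiseDisjoint fun b => ball b (ρ b) :=
    hdisj.mono fun _ => ball_subset_closedBall
  have hu : u.Countable := hdisj'.countable_of_nonempty_interior fun b hb => by
    rw [isOpen_ball.interior_eq]
    exact nonempty_ball.2 (hρ0 b (huE hb))
  have hE : E ⊆ ⋃ b ∈ u, closedBall b (4 * ρ b) := fun x hx => by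
    obtain ⟨b, hb, hxb⟩ := hcover x hx
    exact mem_biUnion hb (hxb (mem_closedBall_self (hρ0 x hx).le))
  have hdilate : ∀ b, 0 < ρ b →
      μ (closedBall b (4 * ρ b)) = 4 ^ finrank ℝ X * μ (ball b (ρ b)) := fun b hb => by
    rw [Measure.addHaar_closedBall_mul_of_pos μ b four_pos, ← Measure.addHaar_closedBall_center,
      Measure.addHaar_closedBall_eq_addHaar_ball, ENNReal.ofReal_pow zero_le_four, ofReal_ofNat]
  calc c * μ E ≤ c * ∑' b : u, μ (closedBall b (4 * ρ b)) := by
        gcongr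
        exact (measure_mono hE).trans (measure_biUnion_le μ hu _)
    _ = 4 ^ finrank ℝ X * ∑' b : u, c * μ (ball b (ρ b)) := by
        rw [← ENNReal.tsum_mul_left, ← ENNReal.tsum_mul_left]
        refine tsum_congr fun b => ?_
        rw [hdilate b (hρ0 b (huE b.2)), mul_left_comm]
    _ ≤ 4 ^ finrank ℝ X * ∑' b : u, ∫⁻ y in ball b (ρ b), h y ∂μ := by
        gcongr with b
        exact hball b (huE b.2)
    _ ≤ 4 ^ finrank ℝ X * ∫⁻ y, h y ∂μ := by
        rw [← lintegral_biUnion hu (fun _ _ => measurableSet_ball) hdisj']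
        gcongr
        exact Measure.restrict_le_self

end Covering

section FracMax

variable {n : ℕ} {α : ℝ} {f : EuclideanSpace ℝ (Fin n) → ℝ} {t : ℝ}

theorem fracMax_eq_zero_of_dstar_eq_zero (hf : AEMeasurable f volume) (ht : 0 < t)
    (h0 : dstar n f t = 0) (x : EuclideanSpace ℝ (Fin n)) : fracMax n α f x = 0 := by
  have hrearr : rearr n (fun y => ENNReal.ofReal |f y|) t = 0 :=
    le_zero_iff.1 (h0 ▸ rearr_le_dstar ht)
  have hint : ∫⁻ y, ENNReal.ofReal |f y| = 0 := by
    simpa [hrearr, h0] using lintegral_tsub_rearr_le_ofReal_mul_dstar hf ht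
  refine ENNReal.iSup_eq_zero.2 fun r => ?_
  rw [le_zero_iff.1 ((setLIntegral_le_lintegral _ _).trans hint.le), mul_zero]

theorem exists_ball_of_lt_fracMax (hα : 0 ≤ α) (hf : AEMeasurable f volume) (ht : 0 < t)
    (h_top : dstar n f t ≠ ⊤) {x : EuclideanSpace ℝ (Fin n)}
    (hx : 2 * (1 + 4 ^ n) * supRpowDstar n α f t < fracMax n α f x) :
    ∃ ρ, 0 < ρ ∧ volume (ball x ρ) ≤ ENNReal.ofReal t ∧
      4 ^ n * dstar n f t * volume (ball x ρ) ≤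
        ∫⁻ y in ball x ρ,
          (ENNReal.ofReal |f y| - rearr n (fun y => ENNReal.ofReal |f y|) t) := by
  set S := supRpowDstar n α f t
  set lam := dstar n f t
  rw [fracMax, lt_iSup_iff] at hx
  obtain ⟨⟨ρ, hρ⟩, hρx⟩ := hx
  set v := volume (ball x ρ)
  have hv0 : v ≠ 0 := (measure_ball_pos volume x hρ).ne'
  have hv_top : v ≠ ⊤ := measure_ball_lt_top.ne
  have hS : S ≤ 2 * (1 + 4 ^ n) * S :=
    le_mul_of_one_le_left' (one_le_two.trans (le_mul_of_one_le_right' le_self_add))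
  have hvt : v ≤ ENNReal.ofReal t := by
    by_contra! htv
    exact hρx.not_ge ((rpow_sub_one_mul_setLIntegral_le_supRpowDstar hf htv hv_top).trans hS)
  have hKv : (1 + 4 ^ n) * lam * v ≤ ∫⁻ y in ball x ρ, ENNReal.ofReal |f y| := by
    refine ENNReal.mul_le_of_rpow_mul_le_rpow_sub_one_mul (by positivity) hv0 hv_top hvt
      (le_trans ?_ hρx.le)
    calc ENNReal.ofReal t ^ (α / n) * ((1 + 4 ^ n) * lam)
        = (1 + 4 ^ n) * (ENNReal.ofReal (t ^ (α / n)) * lam) := by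
          rw [ofReal_rpow_of_pos ht]
          ring
      _ ≤ (1 + 4 ^ n) * (2 * S) :=
          mul_le_mul_right (rpow_mul_dstar_le_two_mul_supRpowDstar hα ht) _
      _ = 2 * (1 + 4 ^ n) * S := by ring
  refine ⟨ρ, hρ, hvt, ?_⟩
  rw [← ENNReal.add_le_add_iff_right (mul_ne_top h_top hv_top)]
  calc 4 ^ n * lam * v + lam * v = (1 + 4 ^ n) * lam * v := by ring
    _ ≤ ∫⁻ y in ball x ρ, ENNReal.ofReal |f y| := hKv
    _ ≤ (∫⁻ y in ball x ρ,
            (ENNReal.ofReal |f y| - rearr n (fun y => ENNReal.ofReal |f y|) t)) +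
          rearr n (fun y => ENNReal.ofReal |f y|) t * v :=
        setLIntegral_le_setLIntegral_tsub_add _ _ _
    _ ≤ _ := by
        gcongr
        exact rearr_le_dstar ht

theorem volume_setOf_lt_fracMax_le (hn : 0 < n) (hα : 0 ≤ α) (hf : AEMeasurable f volume)
    (ht : 0 < t) :
    volume {x | 2 * (1 + 4 ^ n) * supRpowDstar n α f t < fracMax n α f x} ≤
      ENNReal.ofReal t := by
  rcases eq_or_ne (dstar n f t) ⊤ with h_top | h_top
  · have hS : supRpowDstar n α f t = ⊤ := by
      simpa [h_top, Real.rpow_pos_of_pos ht, mul_eq_top] using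
        rpow_mul_dstar_le_two_mul_supRpowDstar (f := f) hα ht
    simp [hS]
  rcases eq_or_ne (dstar n f t) 0 with h0 | h0
  · simp [fracMax_eq_zero_of_dstar_eq_zero hf ht h0]
  have : Nontrivial (EuclideanSpace ℝ (Fin n)) :=
    Module.nontrivial_of_finrank_pos (R := ℝ) (by rwa [finrank_euclideanSpace_fin])
  set E := {x | 2 * (1 + 4 ^ n) * supRpowDstar n α f t < fracMax n α f x}
  choose! ρ hρ0 hρt hρ using
    fun x (hx : x ∈ E) => exists_ball_of_lt_fracMax hα hf ht h_top hx
  obtain ⟨R, hR⟩ := exists_radius_le_of_measure_ball_le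
    (volume : Measure (EuclideanSpace ℝ (Fin n))) ofReal_ne_top
  have hcover := mul_measure_le_of_forall_mul_measure_ball_le volume hρ0
    (fun x hx => hR x _ (hρt x hx)) hρ
  rw [finrank_euclideanSpace_fin] at hcover
  rw [← ENNReal.mul_le_mul_iff_right (mul_ne_zero (pow_ne_zero _ four_ne_zero) h0)
    (mul_ne_top (pow_ne_top ofNat_ne_top) h_top)]
  calc 4 ^ n * dstar n f t * volume E
      ≤ 4 ^ n * ∫⁻ y, (ENNReal.ofReal |f y| - rearr n (fun y => ENNReal.ofReal |f y|) t) :=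
        hcover
    _ ≤ 4 ^ n * (ENNReal.ofReal t * dstar n f t) := by
        gcongr
        exact lintegral_tsub_rearr_le_ofReal_mul_dstar hf ht
    _ = 4 ^ n * dstar n f t * ENNReal.ofReal t := by ring

end FracMax

/-- for `0 ≤ α < n` there is `C > 0` (depending only on `n, α`) with
`(M_α f)*(t) ≤ C · sup_{t<τ<∞} τ^{α/n} f**(τ)` for all `f ∈ L¹_loc(ℝⁿ)` and all `t > 0`. -/
theorem stmt_3 (n : ℕ) (α : ℝ) (hα0 : 0 ≤ α) (hαn : α < n) :
    ∃ C : ℝ, 0 < C ∧ ∀ f : EuclideanSpace ℝ (Fin n) → ℝ, LocallyIntegrable f volume →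
      ∀ t : ℝ, 0 < t →
        rearr n (fracMax n α f) t ≤
          ENNReal.ofReal C *
            ⨆ τ : {τ : ℝ // t < τ}, ENNReal.ofReal (τ.1 ^ (α / n)) * dstar n f τ.1 := by
  have hn : 0 < n := by exact_mod_cast hα0.trans_lt hαn
  refine ⟨2 + 2 * 4 ^ n, by positivity, fun f hf t ht => sInf_le ?_⟩
  have hC : ENNReal.ofReal (2 + 2 * 4 ^ n) = 2 * (1 + 4 ^ n) := by
    rw [mul_add, mul_one, ENNReal.ofReal_add zero_le_two (by positivity),
      ENNReal.ofReal_mul zero_le_two, ENNReal.ofReal_pow zero_le_four]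
    norm_num
  rw [mem_ofPred_eq, hC]
  exact volume_setOf_lt_fracMax_le hn hα0 hf.aestronglyMeasurable.aemeasurable ht
end

section
/- Let 0 ≤ α < n, let φ be a non-negative non-increasing measurable function on (0,∞), and set f(x) := φ(ω_n |x|^n) for x ∈ ℝⁿ, where ω_n is the Lebesgue measure of the unit ball of ℝⁿ. Then there is a positive constant c, depending only on n and α, such that for every x ∈ ℝⁿ, M_α f(x) ≥ c · sup_{τ > ω_n |x|^n} τ^{α/n - 1} ∫₀^τ φ(σ) dσ. -/
open MeasureTheory ENNReal Set Metric

/-!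
The map `y ↦ |B(0, ‖y‖)| = ω_n ‖y‖ⁿ` pushes Lebesgue measure on `ℝⁿ` forward to Lebesgue measure
on `[0, ∞)`, hence `∫₀^τ φ ≤ ∫_{B(0,r)} f` when `|B(0,r)| = τ`. If moreover `τ > ω_n ‖x‖ⁿ`, then
`‖x‖ < r`, so `B(0,r) ⊆ B(x,2r)`, a ball of measure `2ⁿ τ`, and averaging `|f|` over it gives the
bound with `c = 2^(α - n)`.
-/

open Module

namespace MeasureTheory.Measure

theorem ext_of_Iic' {α : Type*} [TopologicalSpace α] {m : MeasurableSpace α}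
    [SecondCountableTopology α] [LinearOrder α] [OrderTopology α] [BorelSpace α] [NoMinOrder α]
    (μ ν : Measure α) (hμ : ∀ b, μ (Iic b) ≠ ∞) (h : ∀ b, μ (Iic b) = ν (Iic b)) : μ = ν := by
  refine μ.ext_of_Ioc' ν
    (fun a b _ ↦ ne_top_of_le_ne_top (hμ b) (measure_mono Ioc_subset_Iic_self)) fun a b hab ↦ ?_
  have hν : ν (Iic a) ≠ ∞ := h a ▸ hμ a
  rw [← Iic_sdiff_Iic, measure_sdiff (Iic_subset_Iic.2 hab.le) nullMeasurableSet_Iic (hμ a),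
    measure_sdiff (Iic_subset_Iic.2 hab.le) nullMeasurableSet_Iic hν, h, h]

variable {E : Type*} [NormedAddCommGroup E] [NormedSpace ℝ E] [MeasurableSpace E] (μ : Measure E)

noncomputable def ballVolume (r : ℝ) : ℝ :=
  (μ (ball 0 1)).toReal * r ^ finrank ℝ E

lemma measurable_ballVolume_norm [OpensMeasurableSpace E] :
    Measurable fun y : E ↦ ballVolume μ ‖y‖ :=
  (measurable_const.mul (measurable_id.pow_const _)).comp measurable_norm

lemma ballVolume_nonneg {r : ℝ} (hr : 0 ≤ r) : 0 ≤ ballVolume μ r :=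
  mul_nonneg ENNReal.toReal_nonneg (pow_nonneg hr _)

variable [FiniteDimensional ℝ E] [μ.IsAddHaarMeasure]

lemma toReal_addHaar_unitBall_pos : 0 < (μ (ball 0 1)).toReal :=
  ENNReal.toReal_pos (measure_ball_pos μ 0 one_pos).ne' measure_ball_lt_top.ne

lemma strictMonoOn_ballVolume [Nontrivial E] : StrictMonoOn (ballVolume μ) (Ici 0) :=
  fun _ ha _ _ hab ↦
    mul_lt_mul_of_pos_left (pow_lt_pow_left₀ hab ha finrank_pos.ne') (toReal_addHaar_unitBall_pos μ)

lemma exists_ballVolume_eq [Nontrivial E] {τ : ℝ} (hτ : 0 ≤ τ) :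
    ∃ r, 0 ≤ r ∧ ballVolume μ r = τ := by
  have hω := toReal_addHaar_unitBall_pos μ
  refine ⟨(τ / (μ (ball 0 1)).toReal) ^ ((finrank ℝ E : ℝ)⁻¹), by positivity, ?_⟩
  rw [ballVolume, Real.rpow_inv_natCast_pow (by positivity) finrank_pos.ne']
  field_simp

lemma ballVolume_norm_le_iff [Nontrivial E] {r : ℝ} (hr : 0 ≤ r) (y : E) :
    ballVolume μ ‖y‖ ≤ ballVolume μ r ↔ y ∈ closedBall 0 r := by
  rw [(strictMonoOn_ballVolume μ).le_iff_le (norm_nonneg y) hr, mem_closedBall_zero_iff]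

variable [BorelSpace E]

lemma addHaar_ball_eq_ofReal (x : E) {r : ℝ} (hr : 0 < r) :
    μ (ball x r) = ENNReal.ofReal (ballVolume μ r) := by
  rw [addHaar_ball_of_pos μ x hr, ballVolume, mul_comm, ENNReal.ofReal_mul ENNReal.toReal_nonneg,
    ENNReal.ofReal_toReal measure_ball_lt_top.ne]

lemma addHaar_closedBall_eq_ofReal (x : E) {r : ℝ} (hr : 0 ≤ r) :
    μ (closedBall x r) = ENNReal.ofReal (ballVolume μ r) := by
  rw [addHaar_closedBall μ x hr, ballVolume, mul_comm, ENNReal.ofReal_mul ENNReal.toReal_nonneg,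
    ENNReal.ofReal_toReal measure_ball_lt_top.ne]

variable [Nontrivial E]

lemma addHaar_ballVolume_norm_le (b : ℝ) :
    μ {y | ballVolume μ ‖y‖ ≤ b} = ENNReal.ofReal b := by
  rcases lt_or_ge b 0 with hb | hb
  · have : {y : E | ballVolume μ ‖y‖ ≤ b} = ∅ :=
      eq_empty_of_forall_notMem fun y hy ↦
        hb.not_ge <| (ballVolume_nonneg μ (norm_nonneg y)).trans hy
    rw [this, measure_empty, ENNReal.ofReal_of_nonpos hb.le]
  · obtain ⟨r, hr, rfl⟩ := exists_ballVolume_eq μ hb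
    rw [show {y : E | ballVolume μ ‖y‖ ≤ _} = closedBall 0 r from
      Set.ext (ballVolume_norm_le_iff μ hr), addHaar_closedBall_eq_ofReal μ 0 hr]

theorem map_ballVolume_norm : μ.map (ballVolume μ ‖·‖) = volume.restrict (Ici 0) := by
  have hIic (b : ℝ) : volume.restrict (Ici 0) (Iic b) = ENNReal.ofReal b := by
    rw [Measure.restrict_apply measurableSet_Iic, Iic_inter_Ici, Real.volume_Icc, sub_zero]
  refine (ext_of_Iic' _ _ (fun b ↦ hIic b ▸ ENNReal.ofReal_ne_top) fun b ↦ ?_).symm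
  rw [hIic, map_apply (measurable_ballVolume_norm μ) measurableSet_Iic]
  exact (addHaar_ballVolume_norm_le μ b).symm

theorem setLIntegral_Ioc_le_setLIntegral_closedBall (F : ℝ → ℝ≥0∞) {r : ℝ} (hr : 0 ≤ r) :
    ∫⁻ σ in Ioc 0 (ballVolume μ r), F σ ≤ ∫⁻ y in closedBall 0 r, F (ballVolume μ ‖y‖) ∂μ := by
  calc ∫⁻ σ in Ioc 0 (ballVolume μ r), F σ
      = ∫⁻ σ, F σ ∂(μ.map (ballVolume μ ‖·‖)).restrict (Ioc 0 (ballVolume μ r)) := by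
        rw [map_ballVolume_norm, Measure.restrict_restrict measurableSet_Ioc,
          inter_eq_left.2 (Ioc_subset_Ioi_self.trans Ioi_subset_Ici_self)]
    _ ≤ ∫⁻ y in closedBall 0 r, F (ballVolume μ ‖y‖) ∂μ := by
        rw [Measure.restrict_map (measurable_ballVolume_norm μ) measurableSet_Ioc]
        exact (lintegral_map_le _ _).trans
          (lintegral_mono_set fun y hy ↦ (ballVolume_norm_le_iff μ hr y).1 hy.2)

lemma addHaar_ball_two_mul_rpow (x : E) {r : ℝ} (hr : 0 < r) (α : ℝ) :
    μ (ball x (2 * r)) ^ (α / finrank ℝ E - 1) =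
      ENNReal.ofReal (2 ^ (α - finrank ℝ E)) *
        ENNReal.ofReal (ballVolume μ r ^ (α / finrank ℝ E - 1)) := by
  have hω := toReal_addHaar_unitBall_pos μ
  have hd : (finrank ℝ E : ℝ) ≠ 0 := Nat.cast_ne_zero.2 finrank_pos.ne'
  rw [addHaar_ball_eq_ofReal μ x (by positivity), ballVolume, ballVolume,
    ENNReal.ofReal_rpow_of_pos (by positivity), ← ENNReal.ofReal_mul (by positivity), mul_pow,
    mul_left_comm, Real.mul_rpow (by positivity) (by positivity), ← Real.rpow_natCast,
    ← Real.rpow_mul zero_le_two]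
  congr 3
  field_simp

theorem exists_rpow_mul_setLIntegral_Ioc_le_ball (φ : ℝ → ℝ) (α : ℝ) {x : E} {τ : ℝ}
    (hxτ : ballVolume μ ‖x‖ < τ) : ∃ R, 0 < R ∧
      ENNReal.ofReal (2 ^ (α - finrank ℝ E)) *
          (ENNReal.ofReal (τ ^ (α / finrank ℝ E - 1)) *
            ∫⁻ σ in Ioc 0 τ, ENNReal.ofReal (φ σ)) ≤
        μ (ball x R) ^ (α / finrank ℝ E - 1) *
          ∫⁻ y in ball x R, ENNReal.ofReal |φ (ballVolume μ ‖y‖)| ∂μ := by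
  obtain ⟨r, hr, rfl⟩ :=
    exists_ballVolume_eq μ ((ballVolume_nonneg μ (norm_nonneg x)).trans hxτ.le)
  have hxr : ‖x‖ < r := ((strictMonoOn_ballVolume μ).lt_iff_lt (norm_nonneg x) hr).1 hxτ
  have hr : 0 < r := (norm_nonneg x).trans_lt hxr
  refine ⟨2 * r, by positivity, ?_⟩
  rw [← mul_assoc, ← addHaar_ball_two_mul_rpow μ x hr]
  gcongr
  calc ∫⁻ σ in Ioc 0 (ballVolume μ r), ENNReal.ofReal (φ σ)
      ≤ ∫⁻ y in closedBall 0 r, ENNReal.ofReal (φ (ballVolume μ ‖y‖)) ∂μ :=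
        setLIntegral_Ioc_le_setLIntegral_closedBall μ _ hr.le
    _ ≤ ∫⁻ y in closedBall 0 r, ENNReal.ofReal |φ (ballVolume μ ‖y‖)| ∂μ :=
        lintegral_mono fun y ↦ ENNReal.ofReal_le_ofReal (le_abs_self _)
    _ ≤ ∫⁻ y in ball x (2 * r), ENNReal.ofReal |φ (ballVolume μ ‖y‖)| ∂μ :=
        lintegral_mono_set (closedBall_subset_ball' (by rw [dist_zero_left]; linarith))

end MeasureTheory.Measure

theorem stmt_5_general (n : ℕ) (α : ℝ) (hα0 : 0 ≤ α) (hαn : α < n) (φ : ℝ → ℝ) :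
    ∃ c : ℝ, 0 < c ∧ ∀ x : EuclideanSpace ℝ (Fin n),
      ENNReal.ofReal c *
          (⨆ τ : {τ : ℝ // (volume (ball (0 : EuclideanSpace ℝ (Fin n)) 1)).toReal * ‖x‖ ^ n < τ},
            ENNReal.ofReal (τ.1 ^ (α / n - 1)) * ∫⁻ σ in Set.Ioc (0 : ℝ) τ.1, ENNReal.ofReal (φ σ)) ≤
        fracMax n α
          (fun y => φ ((volume (ball (0 : EuclideanSpace ℝ (Fin n)) 1)).toReal * ‖y‖ ^ n)) x := by
  have hn : 0 < n := by exact_mod_cast hα0.trans_lt hαn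
  have : Nonempty (Fin n) := ⟨⟨0, hn⟩⟩
  have hd : finrank ℝ (EuclideanSpace ℝ (Fin n)) = n := finrank_euclideanSpace_fin
  refine ⟨2 ^ (α - n), by positivity, fun x ↦ ?_⟩
  rw [ENNReal.mul_iSup]
  refine iSup_le fun ⟨τ, hτ⟩ ↦ ?_
  obtain ⟨R, hR, hτR⟩ := Measure.exists_rpow_mul_setLIntegral_Ioc_le_ball volume φ α
    (x := x) (τ := τ) (by rwa [Measure.ballVolume, hd])
  simp only [Measure.ballVolume, hd] at hτR
  exact hτR.trans (le_iSup_of_le ⟨R, hR⟩ le_rfl)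

/-- for `0 ≤ α < n`, `φ ≥ 0` non-increasing measurable on `(0,∞)` and
`f(x) = φ(ω_n |x|^n)`, there is `c > 0` (depending only on `n, α`) with
`M_α f (x) ≥ c · sup_{τ > ω_n |x|^n} τ^{α/n - 1} ∫₀^τ φ(σ) dσ` for every `x`. -/
theorem stmt_5 (n : ℕ) (α : ℝ) (hα0 : 0 ≤ α) (hαn : α < n)
    (φ : ℝ → ℝ) (hφm : Measurable φ) (hφ0 : ∀ t, 0 ≤ φ t) (hφd : AntitoneOn φ (Set.Ioi 0)) :
    ∃ c : ℝ, 0 < c ∧ ∀ x : EuclideanSpace ℝ (Fin n),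
      ENNReal.ofReal c *
          (⨆ τ : {τ : ℝ // (volume (ball (0 : EuclideanSpace ℝ (Fin n)) 1)).toReal * ‖x‖ ^ n < τ},
            ENNReal.ofReal (τ.1 ^ (α / n - 1)) * ∫⁻ σ in Set.Ioc (0 : ℝ) τ.1, ENNReal.ofReal (φ σ)) ≤
        fracMax n α
          (fun y => φ ((volume (ball (0 : EuclideanSpace ℝ (Fin n)) 1)).toReal * ‖y‖ ^ n)) x :=
  stmt_5_general n α hα0 hαn φ
end

section
/- Let 0 ≤ α < n, 1 < p ≤ q < ∞, 1 ≤ u ≤ s ≤ ∞, 0 < λ < n and 1 < p < (n-λ)/α. If there is a constant C > 0 such that ‖M_α f‖_{𝓛_{q,s;λ}(ℝⁿ)} ≤ C ‖f‖_{𝓛_{p,u;λ}(ℝⁿ)} for all f ∈ 𝓛_{p,u;λ}(ℝⁿ), then necessarily 1/p − 1/q = α/(n−λ). -/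
open MeasureTheory ENNReal Set Metric

/-! Test the inequality on `f = χ_{B(0,δ)}` and let `δ` vary. A ball `B(x,r)` meets `B(0,δ)` in
volume at most `min(r,δ)ⁿ |B(0,1)|`, so `‖f‖_{𝓛_{p,u;λ}} ≲ δ^{(n-λ)/p}`. Averaging over `B(x,2δ)`
gives `M_α f ≳ δ^α` on `B(0,δ)`, so testing the Morrey norm on that ball gives
`‖M_α f‖_{𝓛_{q,s;λ}} ≳ δ^{α+(n-λ)/q}`. A bound `δ^a ≲ δ^b` for all `δ > 0` forces `a = b`. -/

lemma rearr_mono {n : ℕ} {g g' : EuclideanSpace ℝ (Fin n) → ℝ≥0∞} (h : g ≤ g') (t : ℝ) :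
    rearr n g t ≤ rearr n g' t :=
  sInf_le_sInf fun _ hl => (measure_mono fun _ hx => lt_of_lt_of_le hx (h _)).trans hl

lemma rearr_indicator_const (n : ℕ) (E : Set (EuclideanSpace ℝ (Fin n))) (a : ℝ≥0∞) (t : ℝ) :
    rearr n (E.indicator fun _ => a) t = if volume E ≤ ENNReal.ofReal t then 0 else a := by
  have superlevel_subset : ∀ l, {x | l < E.indicator (fun _ => a) x} ⊆ E := fun l x hx => by
    by_contra hxE
    simp [indicator_of_notMem hxE] at hx
  split_ifs with hE
  · exact nonpos_iff_eq_zero.1 (sInf_le ((measure_mono (superlevel_subset 0)).trans hE))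
  refine le_antisymm (sInf_le ?_) (le_sInf fun l hl => ?_)
  · have : {x | a < E.indicator (fun _ => a) x} = ∅ := by
      ext x
      by_cases hx : x ∈ E <;> simp [hx]
    simp [this]
  · by_contra! hla
    have : E ⊆ {x | l < E.indicator (fun _ => a) x} := fun x hx => by simpa [hx] using hla
    exact hE ((measure_mono this).trans hl)

lemma lorentzNorm_mono {n : ℕ} (p : ℝ) (q : ℝ≥0∞) {g g' : EuclideanSpace ℝ (Fin n) → ℝ≥0∞}
    (h : g ≤ g') : lorentzNorm n p q g ≤ lorentzNorm n p q g' := by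
  unfold lorentzNorm
  split_ifs
  · exact iSup_mono fun t => by gcongr; exact rearr_mono h _
  · gcongr with t
    exact rearr_mono h _

lemma lintegral_Ioo_rpow_sub_one {c β : ℝ} (hc : 0 ≤ c) (hβ : 0 < β) :
    ∫⁻ t in Ioo (0 : ℝ) c, ENNReal.ofReal (t ^ (β - 1)) = ENNReal.ofReal (c ^ β / β) := by
  have hint : IntegrableOn (fun t : ℝ => t ^ (β - 1)) (Ioc 0 c) := by
    rw [← intervalIntegrable_iff_integrableOn_Ioc_of_le hc]
    exact intervalIntegral.intervalIntegrable_rpow' (by linarith)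
  rw [← ofReal_integral_eq_lintegral_ofReal (hint.mono_set Ioo_subset_Ioc_self)
      ((ae_restrict_iff' measurableSet_Ioo).2 (.of_forall fun t ht => Real.rpow_nonneg ht.1.le _)),
    ← integral_Ioc_eq_integral_Ioo, ← intervalIntegral.integral_of_le hc,
    integral_rpow (Or.inl (by linarith))]
  simp [Real.zero_rpow hβ.ne']

lemma lorentzNorm_top_indicator_const {n : ℕ} {p : ℝ} (hp : 0 < p)
    {E : Set (EuclideanSpace ℝ (Fin n))} (hE : volume E ≠ ⊤) (a : ℝ≥0∞) :
    lorentzNorm n p ⊤ (E.indicator fun _ => a) = a * volume E ^ (1 / p) := by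
  set m := volume E
  set mR := m.toReal
  have hm : m = ENNReal.ofReal mR := (ofReal_toReal hE).symm
  unfold lorentzNorm
  simp_rw [if_pos, rearr_indicator_const]
  refine le_antisymm (iSup_le fun t => ?_) ?_
  · split_ifs with htm
    · simp
    rw [mul_comm, ← ofReal_rpow_of_pos t.2]
    gcongr
    exact (not_le.1 htm).le
  rcases (toReal_nonneg : 0 ≤ mR).eq_or_lt with hmR0 | hmR0
  · rw [hm, show mR = 0 from hmR0.symm]
    simp [hp]
  -- the supremum is not attained: approach `t = |E|` from below
  have approx : Filter.Tendsto (fun t : ℝ => ENNReal.ofReal (t ^ (1 / p)) * a)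
      (nhdsWithin mR (Iio mR)) (nhds (a * m ^ (1 / p))) := by
    rw [mul_comm a, hm, ofReal_rpow_of_pos hmR0]
    refine ENNReal.Tendsto.mul_const (ENNReal.tendsto_ofReal ?_) (Or.inl (by positivity))
    exact ((Real.continuousAt_rpow_const _ _ (Or.inl hmR0.ne')).tendsto).mono_left
      nhdsWithin_le_nhds
  refine le_of_tendsto approx ?_
  filter_upwards [Ioo_mem_nhdsLT hmR0] with t ht
  refine le_trans (le_of_eq ?_) (le_iSup _ (⟨t, ht.1⟩ : {t : ℝ // 0 < t}))
  have htm : ENNReal.ofReal t < m := by rw [hm]; exact (ofReal_lt_ofReal_iff hmR0).2 ht.2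
  rw [if_neg (not_le.2 htm)]

lemma lorentzNorm_indicator_const_of_ne_top {n : ℕ} {p : ℝ} (hp : 0 < p) {q : ℝ≥0∞}
    (hq : q ≠ 0) (hq' : q ≠ ⊤) {E : Set (EuclideanSpace ℝ (Fin n))} (hE : volume E ≠ ⊤)
    (a : ℝ≥0∞) :
    lorentzNorm n p q (E.indicator fun _ => a) =
      ENNReal.ofReal ((p / q.toReal) ^ (1 / q.toReal)) * a * volume E ^ (1 / p) := by
  set m := volume E
  set mR := m.toReal
  have hm : m = ENNReal.ofReal mR := (ofReal_toReal hE).symm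
  have hmR : 0 ≤ mR := toReal_nonneg
  have hq0 : 0 < q.toReal := toReal_pos hq hq'
  set β := q.toReal / p
  have integrand : EqOn
      (fun t => (ENNReal.ofReal (t ^ (1 / p)) * if m ≤ ENNReal.ofReal t then 0 else a) ^ q.toReal *
        ENNReal.ofReal (1 / t))
      ((Ioo 0 mR).indicator fun t => a ^ q.toReal * ENNReal.ofReal (t ^ (β - 1))) (Ioi 0) := by
    intro t (ht : 0 < t)
    have lt_m_iff : ENNReal.ofReal t < m ↔ t < mR := hm ▸ ofReal_lt_ofReal_iff_of_nonneg ht.le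
    dsimp only
    by_cases htm : t < mR
    · rw [indicator_of_mem (show t ∈ Ioo 0 mR from ⟨ht, htm⟩), if_neg (not_le.2 (lt_m_iff.2 htm)),
        mul_rpow_of_nonneg _ _ hq0.le, ofReal_rpow_of_nonneg (by positivity) hq0.le,
        mul_right_comm, mul_comm _ (a ^ _), ← ofReal_mul (by positivity), ← Real.rpow_mul ht.le,
        Real.rpow_sub_one ht.ne', one_div t, ← div_eq_mul_inv]
      simp only [β, mul_one, div_eq_inv_mul]
    · rw [indicator_of_notMem fun h => htm h.2, if_pos (not_lt.1 (mt lt_m_iff.1 htm)),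
        mul_zero, zero_rpow_of_pos hq0, zero_mul]
  unfold lorentzNorm
  simp_rw [if_neg hq', rearr_indicator_const]
  rw [setLIntegral_congr_fun measurableSet_Ioi integrand, setLIntegral_indicator measurableSet_Ioo,
    inter_eq_left.2 Ioo_subset_Ioi_self, lintegral_const_mul _ (by fun_prop),
    lintegral_Ioo_rpow_sub_one hmR (by positivity), mul_rpow_of_nonneg _ _ (by positivity),
    ← rpow_mul, mul_one_div_cancel hq0.ne', rpow_one, ofReal_rpow_of_nonneg (by positivity)
    (by positivity), hm, ofReal_rpow_of_nonneg hmR (by positivity), mul_comm _ a, mul_assoc,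
    ← ofReal_mul (by positivity)]
  congr 2
  have hexp : β * (1 / q.toReal) = 1 / p := by simp only [β]; field_simp
  rw [Real.div_rpow (by positivity) (by positivity), ← Real.rpow_mul hmR, hexp, mul_comm,
    div_eq_mul_inv, ← Real.inv_rpow (by positivity), inv_div]

noncomputable def lorentzConst (p : ℝ) (q : ℝ≥0∞) : ℝ≥0∞ :=
  if q = ⊤ then 1 else ENNReal.ofReal ((p / q.toReal) ^ (1 / q.toReal))

lemma lorentzConst_ne_zero {p : ℝ} (hp : 0 < p) {q : ℝ≥0∞} (hq : q ≠ 0) : lorentzConst p q ≠ 0 := by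
  unfold lorentzConst
  split_ifs with hq'
  · exact one_ne_zero
  · have : 0 < q.toReal := toReal_pos hq hq'
    simpa using Real.rpow_pos_of_pos (div_pos hp this) _

lemma lorentzConst_ne_top (p : ℝ) (q : ℝ≥0∞) : lorentzConst p q ≠ ⊤ := by
  unfold lorentzConst
  split_ifs <;> simp

lemma lorentzNorm_indicator_const {n : ℕ} {p : ℝ} (hp : 0 < p) {q : ℝ≥0∞} (hq : q ≠ 0)
    {E : Set (EuclideanSpace ℝ (Fin n))} (hE : volume E ≠ ⊤) (a : ℝ≥0∞) :
    lorentzNorm n p q (E.indicator fun _ => a) = lorentzConst p q * a * volume E ^ (1 / p) := by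
  unfold lorentzConst
  split_ifs with hq'
  · rw [hq', lorentzNorm_top_indicator_const hp hE, one_mul]
  · exact lorentzNorm_indicator_const_of_ne_top hp hq hq' hE a

lemma volume_ball_mul {n : ℕ} (x : EuclideanSpace ℝ (Fin n)) {δ : ℝ} (hδ : 0 < δ) (R : ℝ) :
    volume (ball x (δ * R)) =
      ENNReal.ofReal δ ^ (n : ℝ) * volume (ball (0 : EuclideanSpace ℝ (Fin n)) R) := by
  rw [Measure.addHaar_ball_mul_of_pos _ _ hδ, finrank_euclideanSpace_fin, ofReal_pow hδ.le,
    rpow_natCast]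

lemma volume_ball_eq {n : ℕ} (x : EuclideanSpace ℝ (Fin n)) {r : ℝ} (hr : 0 < r) :
    volume (ball x r) =
      ENNReal.ofReal r ^ (n : ℝ) * volume (ball (0 : EuclideanSpace ℝ (Fin n)) 1) := by
  simpa using volume_ball_mul x hr 1

lemma rpow_neg_mul_volume_inter_ball_le {n : ℕ} {lam : ℝ} (hl0 : 0 ≤ lam) (hln : lam ≤ n)
    (x y : EuclideanSpace ℝ (Fin n)) {r δ : ℝ} (hr : 0 < r) (hδ : 0 < δ) :
    ENNReal.ofReal r ^ (-lam) * volume (ball x r ∩ ball y δ) ≤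
      ENNReal.ofReal δ ^ ((n : ℝ) - lam) * volume (ball (0 : EuclideanSpace ℝ (Fin n)) 1) := by
  have hr0 : ENNReal.ofReal r ≠ 0 := by simpa using hr
  have hδ0 : ENNReal.ofReal δ ≠ 0 := by simpa using hδ
  rcases le_total r δ with hrδ | hδr
  · calc ENNReal.ofReal r ^ (-lam) * volume (ball x r ∩ ball y δ)
        ≤ ENNReal.ofReal r ^ (-lam) *
            (ENNReal.ofReal r ^ (n : ℝ) * volume (ball (0 : EuclideanSpace ℝ (Fin n)) 1)) := by
          rw [← volume_ball_eq x hr]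
          gcongr
          exact inter_subset_left
      _ = ENNReal.ofReal r ^ ((n : ℝ) - lam) *
            volume (ball (0 : EuclideanSpace ℝ (Fin n)) 1) := by
          rw [← mul_assoc, ← rpow_add _ _ hr0 ofReal_ne_top, neg_add_eq_sub]
      _ ≤ _ := by gcongr
  · calc ENNReal.ofReal r ^ (-lam) * volume (ball x r ∩ ball y δ)
        ≤ ENNReal.ofReal δ ^ (-lam) *
            (ENNReal.ofReal δ ^ (n : ℝ) * volume (ball (0 : EuclideanSpace ℝ (Fin n)) 1)) := by
          rw [← volume_ball_eq y hδ, rpow_neg, rpow_neg]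
          gcongr
          exact inter_subset_right
      _ = _ := by rw [← mul_assoc, ← rpow_add _ _ hδ0 ofReal_ne_top, neg_add_eq_sub]

lemma lorentzMorrey_indicator_ball_le {n : ℕ} {p lam : ℝ} (hp : 0 < p) {u : ℝ≥0∞} (hu : u ≠ 0)
    (hl0 : 0 ≤ lam) (hln : lam ≤ n) {δ : ℝ} (hδ : 0 < δ) :
    lorentzMorrey n p u lam ((ball (0 : EuclideanSpace ℝ (Fin n)) δ).indicator fun _ => 1) ≤
      lorentzConst p u * volume (ball (0 : EuclideanSpace ℝ (Fin n)) 1) ^ (1 / p) *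
        ENNReal.ofReal δ ^ (((n : ℝ) - lam) / p) := by
  refine iSup₂_le fun x r => ?_
  have hfin : volume (ball x r.1 ∩ ball 0 δ) ≠ ⊤ :=
    ((measure_mono inter_subset_left).trans_lt measure_ball_lt_top).ne
  rw [indicator_indicator, lorentzNorm_indicator_const hp hu hfin, mul_one,
    ← ofReal_rpow_of_pos r.2, show -(lam / p) = -lam * (1 / p) by ring, rpow_mul, mul_left_comm,
    ← mul_rpow_of_nonneg _ _ (by positivity)]
  calc lorentzConst p u * (ENNReal.ofReal r.1 ^ (-lam) * volume (ball x r.1 ∩ ball 0 δ)) ^ (1 / p)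
      ≤ lorentzConst p u * (ENNReal.ofReal δ ^ ((n : ℝ) - lam) *
          volume (ball (0 : EuclideanSpace ℝ (Fin n)) 1)) ^ (1 / p) := by
        gcongr lorentzConst p u * ?_ ^ _
        exact rpow_neg_mul_volume_inter_ball_le hl0 hln x 0 r.2 hδ
    _ = _ := by
        rw [mul_rpow_of_nonneg _ _ (by positivity), ← rpow_mul, mul_one_div]
        ac_rfl

lemma le_lorentzMorrey_of_le_on_ball {n : ℕ} {q : ℝ} (hq : 0 < q) {s : ℝ≥0∞} (hs : s ≠ 0)
    (lam : ℝ) {g : EuclideanSpace ℝ (Fin n) → ℝ≥0∞} {c : ℝ≥0∞} {x : EuclideanSpace ℝ (Fin n)}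
    {r : ℝ} (hr : 0 < r) (hg : ∀ y ∈ ball x r, c ≤ g y) :
    ENNReal.ofReal r ^ (-(lam / q)) * (lorentzConst q s * c * volume (ball x r) ^ (1 / q)) ≤
      lorentzMorrey n q s lam g := by
  rw [ofReal_rpow_of_pos hr, ← lorentzNorm_indicator_const hq hs measure_ball_lt_top.ne]
  refine le_trans ?_ (le_iSup₂ (f := fun (x : EuclideanSpace ℝ (Fin n)) (r : {r : ℝ // 0 < r}) =>
    ENNReal.ofReal (r.1 ^ (-(lam / q))) * lorentzNorm n q s ((ball x r.1).indicator g)) x ⟨r, hr⟩)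
  gcongr
  refine lorentzNorm_mono _ _ fun y => ?_
  by_cases hy : y ∈ ball x r
  · simpa [hy] using hg y hy
  · simp [hy]

lemma ofReal_abs_indicator_one {n : ℕ} (E : Set (EuclideanSpace ℝ (Fin n))) :
    (fun x => ENNReal.ofReal |E.indicator (fun _ => (1 : ℝ)) x|) = E.indicator fun _ => 1 := by
  funext x
  by_cases hx : x ∈ E <;> simp [hx]

lemma fracMax_indicator_ball_ge {n : ℕ} (hn : n ≠ 0) (α : ℝ) {δ : ℝ} (hδ : 0 < δ)
    {x : EuclideanSpace ℝ (Fin n)} (hx : x ∈ ball 0 δ) :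
    volume (ball (0 : EuclideanSpace ℝ (Fin n)) 2) ^ (α / n - 1) *
        volume (ball (0 : EuclideanSpace ℝ (Fin n)) 1) * ENNReal.ofReal δ ^ α ≤
      fracMax n α ((ball (0 : EuclideanSpace ℝ (Fin n)) δ).indicator fun _ => 1) x := by
  have hsub : ball 0 δ ⊆ ball x (δ * 2) := fun y hy => by
    rw [mem_ball] at hx hy ⊢
    linarith [dist_triangle_right y x 0]
  have hint : ∫⁻ y in ball x (δ * 2),
      ENNReal.ofReal |(ball (0 : EuclideanSpace ℝ (Fin n)) δ).indicator (fun _ => (1 : ℝ)) y| =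
      volume (ball (0 : EuclideanSpace ℝ (Fin n)) (δ * 1)) := by
    rw [ofReal_abs_indicator_one, lintegral_indicator_const measurableSet_ball, one_mul,
      Measure.restrict_apply measurableSet_ball, inter_eq_left.2 hsub, mul_one]
  have hδ0 : ENNReal.ofReal δ ≠ 0 := by simpa using hδ
  have hexp : ENNReal.ofReal δ ^ ((n : ℝ) * (α / n - 1)) * ENNReal.ofReal δ ^ (n : ℝ) =
      ENNReal.ofReal δ ^ α := by
    rw [← rpow_add _ _ hδ0 ofReal_ne_top]
    congr 1
    field_simp
    ring
  refine le_trans (le_of_eq ?_) (le_iSup _ (⟨δ * 2, by positivity⟩ : {r : ℝ // 0 < r}))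
  rw [hint, volume_ball_mul x hδ, volume_ball_mul 0 hδ,
    mul_rpow_of_ne_top (by simp) measure_ball_lt_top.ne, ← rpow_mul, ← hexp]
  ac_rfl

lemma exists_le_lorentzMorrey_fracMax_indicator_ball {n : ℕ} (hn : n ≠ 0) (α : ℝ) {q : ℝ}
    (hq : 0 < q) {s : ℝ≥0∞} (hs : s ≠ 0) (lam : ℝ) :
    ∃ K : ℝ≥0∞, K ≠ 0 ∧ K ≠ ⊤ ∧ ∀ δ : ℝ, 0 < δ →
      K * ENNReal.ofReal δ ^ (α + ((n : ℝ) - lam) / q) ≤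
        lorentzMorrey n q s lam
          (fracMax n α ((ball (0 : EuclideanSpace ℝ (Fin n)) δ).indicator fun _ => 1)) := by
  set V : ℝ → ℝ≥0∞ := fun R => volume (ball (0 : EuclideanSpace ℝ (Fin n)) R)
  have hV0 : ∀ R, 0 < R → V R ≠ 0 := fun R hR => (measure_ball_pos _ _ hR).ne'
  have hVT : ∀ R, V R ≠ ⊤ := fun R => measure_ball_lt_top.ne
  refine ⟨lorentzConst q s * (V 2 ^ (α / n - 1) * V 1) * V 1 ^ (1 / q), ?_, ?_, fun δ hδ => ?_⟩
  · simp [lorentzConst_ne_zero hq hs, hV0, hVT]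
  · exact mul_ne_top (mul_ne_top (lorentzConst_ne_top q s)
      (mul_ne_top (rpow_ne_top_of_ne_zero (hV0 2 two_pos) (hVT 2)) (hVT 1)))
      (rpow_ne_top_of_ne_zero (hV0 1 one_pos) (hVT 1))
  have hδ0 : ENNReal.ofReal δ ≠ 0 := by simpa using hδ
  refine le_trans (le_of_eq ?_)
    (le_lorentzMorrey_of_le_on_ball hq hs lam hδ fun y hy => fracMax_indicator_ball_ge hn α hδ hy)
  rw [volume_ball_eq 0 hδ, mul_rpow_of_nonneg _ _ (by positivity), ← rpow_mul,
    show α + ((n : ℝ) - lam) / q = -(lam / q) + α + n * (1 / q) by ring,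
    rpow_add _ _ hδ0 ofReal_ne_top, rpow_add _ _ hδ0 ofReal_ne_top]
  simp only [V]
  ac_rfl

lemma eq_of_forall_ofReal_rpow_le {K₁ K₂ : ℝ≥0∞} (h₁ : K₁ ≠ 0) (h₁' : K₁ ≠ ⊤) (h₂ : K₂ ≠ ⊤)
    {a b : ℝ} (h : ∀ δ : ℝ, 0 < δ → K₁ * ENNReal.ofReal δ ^ a ≤ K₂ * ENNReal.ofReal δ ^ b) :
    a = b := by
  have hk₁ : 0 < K₁.toReal := toReal_pos h₁ h₁'
  have nonpos_of_bdd : ∀ c : ℝ, (∀ δ : ℝ, 0 < δ → K₁.toReal * δ ^ c ≤ K₂.toReal) → c ≤ 0 := by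
    intro c hc
    by_contra! hc0
    obtain ⟨δ, hlarge, hδ⟩ := ((((tendsto_rpow_atTop hc0).const_mul_atTop hk₁).eventually_gt_atTop
      K₂.toReal).and (Filter.eventually_gt_atTop 0)).exists
    exact (hc δ hδ).not_gt hlarge
  have hreal : ∀ δ : ℝ, 0 < δ → K₁.toReal * δ ^ a ≤ K₂.toReal * δ ^ b := fun δ hδ => by
    have hδ0 : ENNReal.ofReal δ ≠ 0 := by simpa using hδ
    simpa [← toReal_rpow, toReal_ofReal hδ.le] using
      toReal_mono (mul_ne_top h₂ (by simp [hδ0])) (h δ hδ)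
  have hab : a - b ≤ 0 := nonpos_of_bdd _ fun δ hδ => by
    rw [Real.rpow_sub hδ, mul_div_assoc', div_le_iff₀ (by positivity)]
    exact hreal δ hδ
  have hba : b - a ≤ 0 := nonpos_of_bdd _ fun δ hδ => by
    have := hreal δ⁻¹ (inv_pos.2 hδ)
    rw [Real.inv_rpow hδ.le, Real.inv_rpow hδ.le, ← div_eq_mul_inv, ← div_eq_mul_inv,
      div_le_div_iff₀ (by positivity) (by positivity)] at this
    rw [Real.rpow_sub hδ, mul_div_assoc', div_le_iff₀ (by positivity)]
    linarith
  linarith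

theorem stmt_9_general (n : ℕ) (α p q lam : ℝ) (u s : ℝ≥0∞)
    (hp : 1 < p) (hpq : p ≤ q)
    (hu : 1 ≤ u) (hus : u ≤ s) (hl0 : 0 < lam) (hln : lam < n)
    (hbdd : ∃ C : ℝ, 0 < C ∧ ∀ f : EuclideanSpace ℝ (Fin n) → ℝ,
      lorentzMorrey n p u lam (fun x => ENNReal.ofReal |f x|) < ⊤ →
      lorentzMorrey n q s lam (fracMax n α f) ≤
        ENNReal.ofReal C * lorentzMorrey n p u lam (fun x => ENNReal.ofReal |f x|)) :
    1 / p - 1 / q = α / (n - lam) := by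
  obtain ⟨C, -, hC⟩ := hbdd
  have hn : n ≠ 0 := by rintro rfl; norm_num at hln; linarith
  have hu0 : u ≠ 0 := (zero_lt_one.trans_le hu).ne'
  have hs0 : s ≠ 0 := (zero_lt_one.trans_le (hu.trans hus)).ne'
  obtain ⟨K, hK0, hKT, hlower⟩ :=
    exists_le_lorentzMorrey_fracMax_indicator_ball hn α (by linarith : 0 < q) hs0 lam
  set K' := lorentzConst p u * volume (ball (0 : EuclideanSpace ℝ (Fin n)) 1) ^ (1 / p)
  have hK'T : K' ≠ ⊤ := mul_ne_top (lorentzConst_ne_top p u)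
    (rpow_ne_top_of_nonneg (by positivity) measure_ball_lt_top.ne)
  have scaling : ∀ δ : ℝ, 0 < δ → K * ENNReal.ofReal δ ^ (α + ((n : ℝ) - lam) / q) ≤
      (ENNReal.ofReal C * K') * ENNReal.ofReal δ ^ (((n : ℝ) - lam) / p) := fun δ hδ => by
    set f := (ball (0 : EuclideanSpace ℝ (Fin n)) δ).indicator fun _ => (1 : ℝ)
    have hupper : lorentzMorrey n p u lam (fun x => ENNReal.ofReal |f x|) ≤
        K' * ENNReal.ofReal δ ^ (((n : ℝ) - lam) / p) := by
      rw [ofReal_abs_indicator_one]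
      exact lorentzMorrey_indicator_ball_le (by linarith) hu0 hl0.le hln.le hδ
    have hfin : lorentzMorrey n p u lam (fun x => ENNReal.ofReal |f x|) < ⊤ :=
      hupper.trans_lt (mul_lt_top hK'T.lt_top
        (rpow_ne_top_of_ne_zero (by simpa using hδ) ofReal_ne_top).lt_top)
    calc K * ENNReal.ofReal δ ^ (α + ((n : ℝ) - lam) / q)
        ≤ lorentzMorrey n q s lam (fracMax n α f) := hlower δ hδ
      _ ≤ ENNReal.ofReal C * lorentzMorrey n p u lam (fun x => ENNReal.ofReal |f x|) := hC f hfin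
      _ ≤ _ := by rw [mul_assoc]; gcongr
  have hexp := eq_of_forall_ofReal_rpow_le hK0 hKT (mul_ne_top ofReal_ne_top hK'T) scaling
  have hnl : (n : ℝ) - lam ≠ 0 := by linarith
  have hα : α = ((n : ℝ) - lam) / p - ((n : ℝ) - lam) / q := by linarith
  rw [eq_div_iff hnl, hα]
  ring

/-- necessity: for `0 ≤ α < n`, `1 < p ≤ q < ∞`, `1 ≤ u ≤ s ≤ ∞`,
`0 < λ < n`, `p < (n-λ)/α` (stated as `p·α < n-λ`), if `M_α` is bounded from
`𝓛_{p,u;λ}(ℝⁿ)` to `𝓛_{q,s;λ}(ℝⁿ)`, then `1/p - 1/q = α/(n-λ)`. -/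
theorem stmt_9 (n : ℕ) (α p q lam : ℝ) (u s : ℝ≥0∞)
    (hα0 : 0 ≤ α) (hαn : α < n) (hp : 1 < p) (hpq : p ≤ q)
    (hu : 1 ≤ u) (hus : u ≤ s) (hl0 : 0 < lam) (hln : lam < n)
    (hpα : p * α < n - lam)
    (hbdd : ∃ C : ℝ, 0 < C ∧ ∀ f : EuclideanSpace ℝ (Fin n) → ℝ,
      lorentzMorrey n p u lam (fun x => ENNReal.ofReal |f x|) < ⊤ →
      lorentzMorrey n q s lam (fracMax n α f) ≤
        ENNReal.ofReal C * lorentzMorrey n p u lam (fun x => ENNReal.ofReal |f x|)) :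
    1 / p - 1 / q = α / (n - lam) :=
  stmt_9_general n α p q lam u s hp hpq hu hus hl0 hln hbdd
end

section
/- Let 1 ≤ p < ∞, 0 < q < ∞ and λ > n. If f is a measurable function on ℝⁿ with ‖f‖_{𝓛_{p,q;λ}(ℝⁿ)} < ∞, then f = 0 almost everywhere on ℝⁿ. -/
open MeasureTheory ENNReal Set Metric

/-! If `f` is not a.e. zero, some level set `S = {|f| > c}` has positive measure, so by
Lebesgue's density theorem there is a point `x` with `|S ∩ B(x, r)| ≥ κ rⁿ` for all small `r`.
The rearrangement of `|f| χ_{B(x,r)}` is then at least `c` on `(0, κ rⁿ)`, which forces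
`‖f χ_{B(x,r)}‖_{L_{p,q}} ≳ r^{n/p}`. Hence `r^{-λ/p} ‖f χ_{B(x,r)}‖_{L_{p,q}} ≳ r^{(n-λ)/p}`,
which is unbounded as `r → 0` because `λ > n`. -/

open Filter Topology

lemma exists_pos_measure_lt_abs_ne_zero {α : Type*} [MeasurableSpace α] {μ : Measure α}
    {f : α → ℝ} (hf : ¬ f =ᵐ[μ] 0) : ∃ c > 0, μ {x | c < |f x|} ≠ 0 := by
  by_contra! h
  refine hf (ae_iff.2 (measure_mono_null ?_ (measure_iUnion_null fun k : ℕ =>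
    h (1 / ((k : ℝ) + 1)) Nat.one_div_pos_of_nat)))
  intro x hx
  exact mem_iUnion.2 (exists_nat_one_div_lt (abs_pos.2 hx))

lemma exists_eventually_half_measure_closedBall_lt_measure_inter {β : Type*} [MetricSpace β]
    [MeasurableSpace β] [BorelSpace β] [SecondCountableTopology β] [HasBesicovitchCovering β]
    (μ : Measure β) [IsLocallyFiniteMeasure μ] {s : Set β} (hs : μ s ≠ 0) :
    ∃ x, ∀ᶠ r in 𝓝[>] 0, 2⁻¹ * μ (closedBall x r) < μ (s ∩ closedBall x r) := by
  have : (ae (μ.restrict s)).NeBot := ae_neBot.2 (mt Measure.restrict_eq_zero.1 hs)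
  obtain ⟨x, hx⟩ := (Besicovitch.ae_tendsto_measure_inter_div μ s).exists
  refine ⟨x, ?_⟩
  filter_upwards [hx.eventually (eventually_gt_nhds ENNReal.one_half_lt_one)] with r hr
  rwa [ENNReal.lt_div_iff_mul_lt (Or.inr (by simp)) (Or.inr (by simp))] at hr

lemma exists_eventually_ofReal_mul_pow_le_measure_inter_ball {E : Type*} [NormedAddCommGroup E]
    [NormedSpace ℝ E] [FiniteDimensional ℝ E] [MeasurableSpace E] [BorelSpace E]
    (μ : Measure E) [μ.IsAddHaarMeasure] {s : Set E} (hs : μ s ≠ 0) :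
    ∃ x, ∃ κ > 0, ∀ᶠ r in 𝓝[>] 0,
      ENNReal.ofReal (κ * r ^ Module.finrank ℝ E) ≤ μ (s ∩ ball x r) := by
  obtain ⟨x, hx⟩ := exists_eventually_half_measure_closedBall_lt_measure_inter μ hs
  have hunit : 0 < μ.real (closedBall 0 1) :=
    ENNReal.toReal_pos (measure_closedBall_pos μ 0 one_pos).ne' measure_closedBall_lt_top.ne
  refine ⟨x, 2⁻¹ * μ.real (closedBall 0 1), by positivity, ?_⟩
  filter_upwards [hx, self_mem_nhdsWithin] with r hr (hr0 : 0 < r)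
  calc ENNReal.ofReal (2⁻¹ * μ.real (closedBall 0 1) * r ^ Module.finrank ℝ E)
      = 2⁻¹ * μ (closedBall x r) := by
        rw [Measure.addHaar_closedBall' μ x hr0.le, mul_right_comm, mul_assoc,
          ENNReal.ofReal_mul (by norm_num), ENNReal.ofReal_mul (by positivity),
          ofReal_measureReal measure_closedBall_lt_top.ne,
          ENNReal.ofReal_inv_of_pos two_pos, ENNReal.ofReal_ofNat]
    _ ≤ μ (s ∩ closedBall x r) := hr.le
    _ ≤ μ (s ∩ ball x r ∪ sphere x r) := by
        rw [← ball_union_sphere]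
        exact measure_mono fun y ⟨hys, hy⟩ => hy.imp (fun h => ⟨hys, h⟩) id
    _ ≤ μ (s ∩ ball x r) := by
        refine (measure_union_le _ _).trans ?_
        rw [Measure.addHaar_sphere_of_ne_zero μ x hr0.ne', add_zero]

lemma le_rearr_of_forall_le {n : ℕ} {g : EuclideanSpace ℝ (Fin n) → ℝ≥0∞} {c : ℝ≥0∞}
    {S : Set (EuclideanSpace ℝ (Fin n))} (hc : ∀ x ∈ S, c ≤ g x) {t : ℝ}
    (ht : ENNReal.ofReal t < volume S) : c ≤ rearr n g t :=
  le_sInf fun _ hl => not_lt.1 fun hlc =>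
    ht.not_ge ((measure_mono fun x hx => hlc.trans_le (hc x hx)).trans hl)

lemma le_lorentzNorm_of_forall_le {n : ℕ} {p q : ℝ} (hp : 0 < p) (hq : 0 < q)
    {g : EuclideanSpace ℝ (Fin n) → ℝ≥0∞} {c : ℝ≥0∞} {S : Set (EuclideanSpace ℝ (Fin n))}
    (hc : ∀ x ∈ S, c ≤ g x) {m : ℝ} (hm : 0 < m) (hS : ENNReal.ofReal m ≤ volume S) :
    ENNReal.ofReal ((m / 2) ^ (1 / p)) * c * 2⁻¹ ^ (1 / q) ≤
      lorentzNorm n p (ENNReal.ofReal q) g := by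
  set B := ENNReal.ofReal ((m / 2) ^ (1 / p)) * c
  rw [lorentzNorm, if_neg ENNReal.ofReal_ne_top, ENNReal.toReal_ofReal hq.le]
  have hpointwise : ∀ t ∈ Ioo (m / 2) m, B ^ q * ENNReal.ofReal (1 / m) ≤
      (ENNReal.ofReal (t ^ (1 / p)) * rearr n g t) ^ q * ENNReal.ofReal (1 / t) := by
    rintro t ⟨hmt, htm⟩
    have ht : 0 < t := by linarith
    dsimp only [B]
    gcongr
    exact le_rearr_of_forall_le hc ((ENNReal.ofReal_lt_ofReal_iff hm).2 htm |>.trans_le hS)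
  have hhalf : 1 / m * (m - m / 2) = 2⁻¹ := by field_simp; ring
  have hbulk : B ^ q * 2⁻¹ ≤ ∫⁻ t in Ioi (0 : ℝ),
      (ENNReal.ofReal (t ^ (1 / p)) * rearr n g t) ^ q * ENNReal.ofReal (1 / t) :=
    calc B ^ q * 2⁻¹ = ∫⁻ _ in Ioo (m / 2) m, B ^ q * ENNReal.ofReal (1 / m) := by
          rw [setLIntegral_const, Real.volume_Ioo, mul_assoc,
            ← ENNReal.ofReal_mul (by positivity), hhalf, ENNReal.ofReal_inv_of_pos two_pos,
            ENNReal.ofReal_ofNat]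
      _ ≤ _ := setLIntegral_mono' measurableSet_Ioo hpointwise
      _ ≤ _ := lintegral_mono_set fun t ht => lt_trans (by positivity) ht.1
  calc B * 2⁻¹ ^ (1 / q) = (B ^ q * 2⁻¹) ^ (1 / q) := by
        rw [ENNReal.mul_rpow_of_nonneg _ _ (by positivity), ← ENNReal.rpow_mul,
          mul_one_div_cancel hq.ne', ENNReal.rpow_one]
    _ ≤ _ := by gcongr

lemma le_lorentzMorrey_of_forall_le {n : ℕ} {p q lam : ℝ} (hp : 0 < p) (hq : 0 < q)
    {g : EuclideanSpace ℝ (Fin n) → ℝ≥0∞} {c : ℝ≥0∞} {S : Set (EuclideanSpace ℝ (Fin n))}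
    (hc : ∀ x ∈ S, c ≤ g x) {x : EuclideanSpace ℝ (Fin n)} {κ r : ℝ} (hκ : 0 < κ) (hr : 0 < r)
    (hS : ENNReal.ofReal (κ * r ^ n) ≤ volume (S ∩ ball x r)) :
    ENNReal.ofReal (r ^ ((n - lam) / p)) *
        (ENNReal.ofReal ((κ / 2) ^ (1 / p)) * c * 2⁻¹ ^ (1 / q)) ≤
      lorentzMorrey n p (ENNReal.ofReal q) lam g := by
  have hnorm := le_lorentzNorm_of_forall_le (g := (ball x r).indicator g) hp hq
    (fun y hy => (indicator_of_mem hy.2 g).symm ▸ hc y hy.1) (by positivity) hS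
  have hpow : r ^ ((n - lam) / p) * (κ / 2) ^ (1 / p) =
      r ^ (-(lam / p)) * (κ * r ^ n / 2) ^ (1 / p) := by
    rw [mul_div_right_comm, Real.mul_rpow (by positivity) (by positivity), ← Real.rpow_natCast,
      ← Real.rpow_mul hr.le, mul_left_comm, ← Real.rpow_add hr]
    ring_nf
  calc _ = ENNReal.ofReal (r ^ (-(lam / p))) *
        (ENNReal.ofReal ((κ * r ^ n / 2) ^ (1 / p)) * c * 2⁻¹ ^ (1 / q)) := by
        simp only [← mul_assoc, ← ENNReal.ofReal_mul (Real.rpow_nonneg hr.le _), hpow]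
    _ ≤ ENNReal.ofReal (r ^ (-(lam / p))) *
        lorentzNorm n p (ENNReal.ofReal q) ((ball x r).indicator g) := by gcongr
    _ ≤ _ := le_iSup₂_of_le (κ := fun _ => {r : ℝ // 0 < r}) x ⟨r, hr⟩ le_rfl

theorem stmt_13_general (n : ℕ) (p q lam : ℝ) (hp : 1 ≤ p) (hq : 0 < q) (hl : (n : ℝ) < lam)
    (f : EuclideanSpace ℝ (Fin n) → ℝ)
    (hfin : lorentzMorrey n p (ENNReal.ofReal q) lam (fun x => ENNReal.ofReal |f x|) < ⊤) :
    f =ᵐ[volume] 0 := by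
  by_contra hf
  have hp0 : 0 < p := by linarith
  obtain ⟨c, hc, hS⟩ := exists_pos_measure_lt_abs_ne_zero hf
  obtain ⟨x, κ, hκ, hdense⟩ := exists_eventually_ofReal_mul_pow_le_measure_inter_ball volume hS
  rw [finrank_euclideanSpace_fin] at hdense
  set C := ENNReal.ofReal ((κ / 2) ^ (1 / p)) * ENNReal.ofReal c * 2⁻¹ ^ (1 / q)
  have hC : C ≠ 0 := mul_ne_zero (mul_ne_zero (by positivity) (by positivity))
    (ENNReal.rpow_pos (by simp) (by simp)).ne'
  have hlower : ∀ᶠ r in 𝓝[>] 0, ENNReal.ofReal (r ^ ((n - lam) / p)) * C ≤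
      lorentzMorrey n p (ENNReal.ofReal q) lam (fun x => ENNReal.ofReal |f x|) := by
    filter_upwards [hdense, self_mem_nhdsWithin] with r hr (hr0 : 0 < r)
    exact le_lorentzMorrey_of_forall_le hp0 hq (fun y hy => ENNReal.ofReal_le_ofReal hy.le)
      hκ hr0 hr
  have hblowup :
      Tendsto (fun r : ℝ => ENNReal.ofReal (r ^ ((n - lam) / p)) * C) (𝓝[>] 0) (𝓝 ⊤) := by
    have hexp : ((n : ℝ) - lam) / p < 0 := div_neg_of_neg_of_pos (by linarith) hp0
    have := ENNReal.tendsto_ofReal_atTop.comp (tendsto_rpow_neg_nhdsGT_zero hexp)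
    simpa only [ENNReal.top_mul hC, Function.comp_apply] using
      ENNReal.Tendsto.mul_const (b := C) this (Or.inl top_ne_zero)
  exact hfin.ne (top_le_iff.1 (le_of_tendsto hblowup hlower))

/-- for `1 ≤ p < ∞`, `0 < q < ∞` and `λ > n`, any measurable `f` with
`‖f‖_{𝓛_{p,q;λ}(ℝⁿ)} < ∞` vanishes a.e. -/
theorem stmt_13 (n : ℕ) (p q lam : ℝ) (hp : 1 ≤ p) (hq : 0 < q) (hl : (n : ℝ) < lam)
    (f : EuclideanSpace ℝ (Fin n) → ℝ) (hf : Measurable f)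
    (hfin : lorentzMorrey n p (ENNReal.ofReal q) lam (fun x => ENNReal.ofReal |f x|) < ⊤) :
    f =ᵐ[volume] 0 :=
  stmt_13_general n p q lam hp hq hl f hfin
end
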